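/- arXiv:2510.19442 — 10 statements merged into one kernel-verified Lean document; each statement's English description precedes it below -/
import Mathlib

section
/- Let n, k, q, r_X, r_G, n_G, k_R, n_R, r_R, d, d_R be positive integers with q ≤ k. Let H_X ∈ 𝔽₂^{r_X×n}, J_X ∈ 𝔽₂^{k×n}, α_⊥ ∈ 𝔽₂^{(k−q)×k}, H_G ∈ 𝔽₂^{r_G×n_G}, S ∈ 𝔽₂^{n_G×n} with S ≠ 0, T ∈ 𝔽₂^{r_X×r_G}, β ∈ 𝔽₂^{(k−q)×r_G}, and H_R ∈ 𝔽₂^{r_R×n_R}. Assume: (a) every u ∈ 𝔽₂^n with H_X uᵀ = 0 and (α_⊥ J_X) uᵀ ≠ 0 satisfies |u| ≥ d; (b) H_X Sᵀ = T H_G and (α_⊥ J_X) Sᵀ = β H_G; (c) H_R has full row rank r_R, and every nonzero y ∈ 𝔽₂^{n_R} with H_R yᵀ = 0 satisfies |y| ≥ d_R; (d) G_R^r ∈ 𝔽₂^{n_R×k_R} is the matrix whose transpose is (E_{k_R} | 0). Define the block matrices H^D_X = [[E_{k_R}⊗H_X, 0, (G_R^r)ᵀ⊗T], [0, E_{r_R}⊗H_G,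 H_R⊗E_{r_G}]] and J^D_X = (E_{k_R}⊗(α_⊥ J_X) | 0 | (G_R^r)ᵀ⊗β), whose columns are split into blocks of sizes k_R·n, r_R·n_G, and n_R·r_G. Then every e ∈ 𝔽₂^{k_R n + r_R n_G + n_R r_G} with H^D_X eᵀ = 0 and J^D_X eᵀ ≠ 0 satisfies |e| ≥ d_R or ‖S‖·|e| ≥ d. -/
open Matrix Kronecker

/-- The matrix norm induced by Hamming weight: the maximum of `|u A| / |u|`
over nonzero row vectors `u`. -/
noncomputable def matNorm {m n : ℕ} (A : Matrix (Fin m) (Fin n) (ZMod 2)) : ℝ :=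
  ⨆ u : Fin m → ZMod 2,
    if u = 0 then 0 else (hammingNorm (Matrix.vecMul u A) : ℝ) / (hammingNorm u : ℝ)

section Helpers

open Finset

lemma z2add {a b : ZMod 2} (h : a + b = 0) : a = b := by
  have := CharTwo.sub_eq_add a b
  rw [← this, sub_eq_zero] at h
  exact h

lemma sum_ite_pull {ι M : Type*} [Fintype ι] [AddCommMonoid M] (c : Prop) [Decidable c]
    (a : ι → M) : ∑ i, (if c then a i else 0) = if c then ∑ i, a i else 0 := by
  split <;> simp

lemma ham_le_of_map {ι μ : Type*} [Fintype ι] [Fintype μ] [DecidableEq ι] [DecidableEq μ]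
    (x : ι → ZMod 2) (z : μ → ZMod 2) (g : ι → μ)
    (hg : Set.InjOn g {i | x i ≠ 0}) (h : ∀ i, x i ≠ 0 → z (g i) ≠ 0) :
    hammingNorm x ≤ hammingNorm z := by
  classical
  apply Finset.card_le_card_of_injOn g
  · intro i hi
    simp only [mem_coe, mem_filter, mem_univ, true_and] at hi ⊢
    exact h i hi
  · intro a ha b hb hab
    exact hg (by simpa using ha) (by simpa using hb) hab

lemma ham_add_le_of_maps {ι κ μ : Type*} [Fintype ι] [Fintype κ] [Fintype μ]
    [DecidableEq ι] [DecidableEq κ] [DecidableEq μ]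
    (x : ι → ZMod 2) (y : κ → ZMod 2) (z : μ → ZMod 2) (g1 : ι → μ) (g2 : κ → μ)
    (hg1 : Set.InjOn g1 {i | x i ≠ 0}) (hg2 : Set.InjOn g2 {i | y i ≠ 0})
    (hd : ∀ i j, g1 i ≠ g2 j)
    (h1 : ∀ i, x i ≠ 0 → z (g1 i) ≠ 0) (h2 : ∀ i, y i ≠ 0 → z (g2 i) ≠ 0) :
    hammingNorm x + hammingNorm y ≤ hammingNorm z := by
  classical
  have c1 : (({i | x i ≠ 0} : Finset ι)).card = (({i | x i ≠ 0} : Finset ι).image g1).card := by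
    rw [Finset.card_image_of_injOn]
    intro a ha b hb
    exact hg1 (by simpa using ha) (by simpa using hb)
  have c2 : (({i | y i ≠ 0} : Finset κ)).card = (({i | y i ≠ 0} : Finset κ).image g2).card := by
    rw [Finset.card_image_of_injOn]
    intro a ha b hb
    exact hg2 (by simpa using ha) (by simpa using hb)
  unfold hammingNorm
  rw [c1, c2, ← Finset.card_union_of_disjoint]
  · apply Finset.card_le_card
    intro m hm
    simp only [Finset.mem_union, Finset.mem_image, mem_filter, mem_univ, true_and] at hm ⊢
    rcases hm with ⟨i, hi, rfl⟩ | ⟨i, hi, rfl⟩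
    exacts [h1 i hi, h2 i hi]
  · rw [Finset.disjoint_left]
    rintro m hm1 hm2
    simp only [Finset.mem_image] at hm1 hm2
    obtain ⟨i, _, rfl⟩ := hm1
    obtain ⟨j, _, hj⟩ := hm2
    exact hd i j hj.symm

lemma ham_add_le {ι : Type*} (x y : ι → ZMod 2) [Fintype ι] [DecidableEq ι] :
    hammingNorm (x + y) ≤ hammingNorm x + hammingNorm y := by
  classical
  unfold hammingNorm
  calc ({i | (x + y) i ≠ 0} : Finset ι).card
      ≤ (({i | x i ≠ 0} : Finset ι) ∪ ({i | y i ≠ 0} : Finset ι)).card := by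
        apply Finset.card_le_card
        intro i hi
        simp only [mem_filter, mem_univ, true_and, Finset.mem_union, Pi.add_apply] at hi ⊢
        by_contra hc
        push_neg at hc
        simp [hc.1, hc.2] at hi
    _ ≤ _ := Finset.card_union_le _ _

lemma matNorm_term_le {m n : ℕ} (A : Matrix (Fin m) (Fin n) (ZMod 2)) (u : Fin m → ZMod 2) :
    (if u = 0 then (0:ℝ) else (hammingNorm (Matrix.vecMul u A) : ℝ) / (hammingNorm u : ℝ))
      ≤ matNorm A := by
  apply le_ciSup (f := fun u : Fin m → ZMod 2 =>
    if u = 0 then (0:ℝ) else (hammingNorm (Matrix.vecMul u A) : ℝ) / (hammingNorm u : ℝ))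
  exact (Set.finite_range _).bddAbove

lemma matNorm_nonneg {m n : ℕ} (A : Matrix (Fin m) (Fin n) (ZMod 2)) : 0 ≤ matNorm A := by
  have := matNorm_term_le A 0
  simpa using this

lemma ham_vecMul_le {m n : ℕ} (A : Matrix (Fin m) (Fin n) (ZMod 2)) (u : Fin m → ZMod 2) :
    (hammingNorm (Matrix.vecMul u A) : ℝ) ≤ matNorm A * (hammingNorm u : ℝ) := by
  by_cases hu : u = 0
  · subst hu; simp [Matrix.zero_vecMul, matNorm_nonneg]
  · have h1 := matNorm_term_le A u
    rw [if_neg hu] at h1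
    have hpos : (0:ℝ) < (hammingNorm u : ℝ) := by
      exact_mod_cast hammingNorm_pos_iff.mpr hu
    rw [div_le_iff₀ hpos] at h1
    linarith

lemma one_le_matNorm {m n : ℕ} (A : Matrix (Fin m) (Fin n) (ZMod 2)) (hA : A ≠ 0) :
    1 ≤ matNorm A := by
  have : ∃ i j, A i j ≠ 0 := by
    by_contra hc; push_neg at hc
    exact hA (by ext i j; simpa using hc i j)
  obtain ⟨i, j, hij⟩ := this
  have h1 := matNorm_term_le A (Pi.single i 1)
  have hne : (Pi.single i 1 : Fin m → ZMod 2) ≠ 0 := by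
    intro h
    have := congrFun h i
    simp at this
  rw [if_neg hne] at h1
  have hvm : Matrix.vecMul (Pi.single i 1) A = A i := by
    ext j'
    simp [Matrix.vecMul, dotProduct, Pi.single_apply]
  have hh : hammingNorm (Pi.single i (1: ZMod 2) : Fin m → ZMod 2) = 1 := by
    unfold hammingNorm
    rw [Finset.card_eq_one]
    refine ⟨i, ?_⟩
    ext x
    simp only [Finset.mem_filter, Finset.mem_univ, true_and, Finset.mem_singleton,
      Pi.single_apply]
    by_cases hx : x = i <;> simp [hx]
  rw [hvm, hh] at h1
  have : 1 ≤ hammingNorm (A i) := by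
    rw [Nat.one_le_iff_ne_zero, hammingNorm_ne_zero_iff]
    intro h
    exact hij (congrFun h j)
  calc (1:ℝ) ≤ (hammingNorm (A i) : ℝ) / 1 := by
        rw [div_one]; exact_mod_cast this
    _ ≤ matNorm A := by simpa using h1

lemma vecMul_surj_of_mulVec_inj {m p : Type*} [Fintype m] [Fintype p] [DecidableEq m]
    [DecidableEq p] (M : Matrix m p (ZMod 2)) (h : Function.Injective M.mulVec) :
    Function.Surjective (fun w : m → ZMod 2 => Matrix.vecMul w M) := by
  have hrank : M.rank = Fintype.card p := by
    rw [Matrix.rank]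
    have hker : LinearMap.ker M.mulVecLin = ⊥ := by
      rw [LinearMap.ker_eq_bot]; exact h
    rw [LinearMap.finrank_range_of_inj (by rw [← LinearMap.ker_eq_bot]; exact hker)]
    simp
  have hrt : Mᵀ.rank = Fintype.card p := by rw [Matrix.rank_transpose]; exact hrank
  have hsurj : Function.Surjective Mᵀ.mulVecLin := by
    rw [← LinearMap.range_eq_top]
    apply Submodule.eq_top_of_finrank_eq
    rw [← Matrix.rank, hrt, Module.finrank_pi]
  intro c
  obtain ⟨w, hw⟩ := hsurj c
  refine ⟨w, ?_⟩
  simpa [Matrix.mulVecLin_apply, Matrix.mulVec_transpose] using hw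

end Helpers

set_option maxHeartbeats 2000000 in
/-- Z-distance bound `d_D ≥ min {d / ‖S‖, d_R}` for the deformed code of
parallelized code surgery. -/
theorem stmt0
    (n k q rX rG nG kR nR rR d dR : ℕ)
    (hn : 0 < n) (hk : 0 < k) (hq : 0 < q) (hrX : 0 < rX) (hrG : 0 < rG)
    (hnG : 0 < nG) (hkR : 0 < kR) (hnR : 0 < nR) (hrR : 0 < rR)
    (hd : 0 < d) (hdR : 0 < dR) (hqk : q ≤ k) (hkRnR : kR ≤ nR)
    (HX : Matrix (Fin rX) (Fin n) (ZMod 2))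
    (JX : Matrix (Fin k) (Fin n) (ZMod 2))
    (αperp : Matrix (Fin (k - q)) (Fin k) (ZMod 2))
    (HG : Matrix (Fin rG) (Fin nG) (ZMod 2))
    (S : Matrix (Fin nG) (Fin n) (ZMod 2)) (hS : S ≠ 0)
    (T : Matrix (Fin rX) (Fin rG) (ZMod 2))
    (β : Matrix (Fin (k - q)) (Fin rG) (ZMod 2))
    (HR : Matrix (Fin rR) (Fin nR) (ZMod 2))
    (GRr : Matrix (Fin nR) (Fin kR) (ZMod 2))
    (ha : ∀ u : Fin n → ZMod 2,
      HX.mulVec u = 0 → (αperp * JX).mulVec u ≠ 0 → d ≤ hammingNorm u)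
    (hb1 : HX * Sᵀ = T * HG)
    (hb2 : (αperp * JX) * Sᵀ = β * HG)
    (hc1 : HR.rank = rR)
    (hc2 : ∀ y : Fin nR → ZMod 2, y ≠ 0 → HR.mulVec y = 0 → dR ≤ hammingNorm y)
    (hGRr : ∀ (i : Fin nR) (j : Fin kR), GRr i j = if (i : ℕ) = (j : ℕ) then 1 else 0) :
    ∀ e : (Fin kR × Fin n) ⊕ ((Fin rR × Fin nG) ⊕ (Fin nR × Fin rG)) → ZMod 2,
      (Matrix.fromBlocks
        ((1 : Matrix (Fin kR) (Fin kR) (ZMod 2)) ⊗ₖ HX)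
        (Matrix.fromCols (0 : Matrix (Fin kR × Fin rX) (Fin rR × Fin nG) (ZMod 2))
          (GRrᵀ ⊗ₖ T))
        (0 : Matrix (Fin rR × Fin rG) (Fin kR × Fin n) (ZMod 2))
        (Matrix.fromCols ((1 : Matrix (Fin rR) (Fin rR) (ZMod 2)) ⊗ₖ HG)
          (HR ⊗ₖ (1 : Matrix (Fin rG) (Fin rG) (ZMod 2))))).mulVec e = 0 →
      (Matrix.fromCols
        ((1 : Matrix (Fin kR) (Fin kR) (ZMod 2)) ⊗ₖ (αperp * JX))
        (Matrix.fromCols (0 : Matrix (Fin kR × Fin (k - q)) (Fin rR × Fin nG) (ZMod 2))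
          (GRrᵀ ⊗ₖ β))).mulVec e ≠ 0 →
      (dR ≤ hammingNorm e ∨ (d : ℝ) ≤ matNorm S * (hammingNorm e : ℝ)) := by
  intro e hH hJ
  by_cases hcase : dR ≤ hammingNorm e
  · exact Or.inl hcase
  right
  have hlt : hammingNorm e < dR := lt_of_not_ge hcase
  classical
  set e1 : Fin kR → Fin n → ZMod 2 := fun j m => e (.inl (j, m)) with he1
  set e2 : Fin rR → Fin nG → ZMod 2 := fun r m => e (.inr (.inl (r, m))) with he2
  set f : Fin nR → Fin rG → ZMod 2 := fun i g => e (.inr (.inr (i, g))) with hf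
  have hcond : ∀ (j : Fin kR) (i : Fin nR),
      ((i : ℕ) = (j : ℕ)) ↔ i = Fin.castLE hkRnR j := by
    intro j i
    rw [Fin.ext_iff]
    simp
  -- equation from the first block row
  have Eq1 : ∀ (j : Fin kR),
      HX.mulVec (e1 j) = T.mulVec (f (Fin.castLE hkRnR j)) := by
    intro j
    funext x
    have h0 := congrFun hH (Sum.inl (j, x))
    simp only [Matrix.mulVec, dotProduct, Fintype.sum_sum_type, Fintype.sum_prod_type,
      Matrix.fromBlocks_apply₁₁, Matrix.fromBlocks_apply₁₂, Matrix.fromCols_apply_inl,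
      Matrix.fromCols_apply_inr, Matrix.kroneckerMap_apply, Matrix.one_apply,
      Matrix.zero_apply, zero_mul, Finset.sum_const_zero, Matrix.transpose_apply,
      Pi.zero_apply, hGRr, ite_mul, one_mul, add_zero, zero_add] at h0
    simp only [hcond j, sum_ite_pull] at h0
    rw [Finset.sum_ite_eq _ j, Finset.sum_ite_eq' _ (Fin.castLE hkRnR j)] at h0
    simp only [Finset.mem_univ, if_true] at h0
    exact z2add h0
  -- equation from the second block row
  have Eq2 : ∀ (r : Fin rR) (g : Fin rG),
      HG.mulVec (e2 r) g = ∑ i : Fin nR, HR r i * f i g := by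
    intro r g
    have h0 := congrFun hH (Sum.inr (r, g))
    simp only [Matrix.mulVec, dotProduct, Fintype.sum_sum_type, Fintype.sum_prod_type,
      Matrix.fromBlocks_apply₂₁, Matrix.fromBlocks_apply₂₂, Matrix.fromCols_apply_inl,
      Matrix.fromCols_apply_inr, Matrix.kroneckerMap_apply, Matrix.one_apply,
      Matrix.zero_apply, zero_mul, Finset.sum_const_zero, mul_ite, mul_one, mul_zero,
      Pi.zero_apply, ite_mul, one_mul, add_zero, zero_add] at h0
    simp only [sum_ite_pull] at h0
    rw [Finset.sum_ite_eq _ r] at h0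
    simp only [Finset.mem_univ, if_true] at h0
    have h1 : ∀ i : Fin nR, (∑ g' : Fin rG, if g = g' then HR r i * f i g' else 0)
        = HR r i * f i g := by
      intro i
      rw [Finset.sum_ite_eq _ g]
      simp
    simp only [hf] at h1
    simp only [h1] at h0
    exact z2add h0
  -- witness from the logical condition
  obtain ⟨⟨j, x0⟩, hjx⟩ := Function.ne_iff.mp hJ
  have EqJ : (αperp * JX).mulVec (e1 j) x0
      + β.mulVec (f (Fin.castLE hkRnR j)) x0 ≠ 0 := by
    intro hcontra
    apply hjx
    simp only [Matrix.mulVec, dotProduct, Fintype.sum_sum_type, Fintype.sum_prod_type,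
      Matrix.fromCols_apply_inl, Matrix.fromCols_apply_inr,
      Matrix.kroneckerMap_apply, Matrix.one_apply, Matrix.zero_apply, zero_mul,
      Finset.sum_const_zero, Matrix.transpose_apply, Pi.zero_apply, hGRr, ite_mul,
      one_mul, add_zero, zero_add]
    simp only [hcond j, sum_ite_pull]
    rw [Finset.sum_ite_eq _ j, Finset.sum_ite_eq' _ (Fin.castLE hkRnR j)]
    simp only [Finset.mem_univ, if_true]
    simpa [Matrix.mulVec, dotProduct] using hcontra
  -- injectivity of restricted columns of HR
  set A := {i : Fin nR // f i ≠ 0} with hA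
  set M : Matrix (Fin rR) A (ZMod 2) := fun r i => HR r i.1 with hM
  have hext : ∀ c : A → ZMod 2,
      HR.mulVec (fun i => if h : f i ≠ 0 then c ⟨i, h⟩ else 0) = M.mulVec c := by
    intro c
    funext r
    simp only [Matrix.mulVec, dotProduct]
    rw [← Fintype.sum_subtype_add_sum_subtype (fun i => f i ≠ 0)
      (fun i => HR r i * (if h : f i ≠ 0 then c ⟨i, h⟩ else 0))]
    have h2 : ∑ i : {i : Fin nR // ¬ f i ≠ 0},
        HR r i.1 * (if h : f i.1 ≠ 0 then c ⟨i.1, h⟩ else 0) = 0 := by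
      apply Finset.sum_eq_zero
      intro i _
      rw [dif_neg i.2, mul_zero]
    rw [h2, add_zero]
    apply Finset.sum_congr rfl
    intro i _
    rw [dif_pos i.2]
  -- choice of a nonzero column position of f
  have hgch : ∀ i : Fin nR, f i ≠ 0 → ∃ g, f i g ≠ 0 := by
    intro i hi
    exact Function.ne_iff.mp hi
  set gch : Fin nR → Fin rG := fun i =>
    if h : ∃ g, f i g ≠ 0 then h.choose else ⟨0, hrG⟩ with hgchdef
  have hgch2 : ∀ i : Fin nR, f i ≠ 0 → f i (gch i) ≠ 0 := by
    intro i hi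
    have h := hgch i hi
    simp only [hgchdef, dif_pos h]
    exact h.choose_spec
  -- injectivity of M.mulVec
  have hinj : Function.Injective M.mulVec := by
    intro c c' hcc
    have hsub : M.mulVec (c - c') = 0 := by
      rw [Matrix.mulVec_sub, hcc, sub_self]
    set y : Fin nR → ZMod 2 := fun i => if h : f i ≠ 0 then (c - c') ⟨i, h⟩ else 0 with hy
    have hHRy : HR.mulVec y = 0 := by rw [hext, hsub]
    have hyle : hammingNorm y ≤ hammingNorm e := by
      apply ham_le_of_map y e (fun i => Sum.inr (Sum.inr (i, gch i)))
      · intro a _ b _ hab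
        simp only [Sum.inr.injEq, Prod.mk.injEq] at hab
        exact hab.1
      · intro i hi
        have hfi : f i ≠ 0 := by
          by_contra hc
          simp only [hy, dif_neg (not_not_intro hc)] at hi
          exact hi rfl
        exact hgch2 i hfi
    have hy0 : y = 0 := by
      by_contra hy0
      exact absurd (le_trans (hc2 y hy0 hHRy) hyle) (not_le.mpr hlt)
    have : c - c' = 0 := by
      funext i
      have := congrFun hy0 i.1
      simp only [hy, dif_pos i.2, Pi.zero_apply] at this
      simpa using this
    rw [sub_eq_zero] at this
    exact this
  have hsurj := vecMul_surj_of_mulVec_inj M hinj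
  by_cases hfj : f (Fin.castLE hkRnR j) = 0
  · -- the ancilla part at block j vanishes; use e1 j directly
    have hHXj : HX.mulVec (e1 j) = 0 := by
      rw [Eq1 j, hfj, Matrix.mulVec_zero]
    have hJj : (αperp * JX).mulVec (e1 j) ≠ 0 := by
      intro hcontra
      apply EqJ
      rw [hcontra, hfj, Matrix.mulVec_zero]
      simp
    have hdle : d ≤ hammingNorm (e1 j) := ha (e1 j) hHXj hJj
    have hle : hammingNorm (e1 j) ≤ hammingNorm e := by
      apply ham_le_of_map (e1 j) e (fun m => Sum.inl (j, m))
      · intro a _ b _ hab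
        simp only [Sum.inl.injEq, Prod.mk.injEq] at hab
        exact hab.2
      · intro m hm
        exact hm
    have hN : 1 ≤ matNorm S := one_le_matNorm S hS
    have hde : (d : ℝ) ≤ (hammingNorm e : ℝ) := by exact_mod_cast le_trans hdle hle
    nlinarith [Nat.cast_nonneg (α := ℝ) (hammingNorm e)]
  · -- the interesting case
    set jA : A := ⟨Fin.castLE hkRnR j, hfj⟩ with hjA
    obtain ⟨w, hw⟩ := hsurj (Pi.single jA 1)
    set s : Fin nG → ZMod 2 := fun m => ∑ r : Fin rR, w r * e2 r m with hsdef
    have hs : HG.mulVec s = f (Fin.castLE hkRnR j) := by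
      funext g
      have step1 : HG.mulVec s g = ∑ r : Fin rR, w r * HG.mulVec (e2 r) g := by
        simp only [Matrix.mulVec, dotProduct, hsdef, Finset.mul_sum]
        rw [Finset.sum_comm]
        apply Finset.sum_congr rfl
        intro r _
        apply Finset.sum_congr rfl
        intro m _
        ring
      rw [step1]
      simp only [Eq2]
      have step3 : ∑ r : Fin rR, w r * ∑ i : Fin nR, HR r i * f i g
          = ∑ i : Fin nR, (∑ r : Fin rR, w r * HR r i) * f i g := by
        simp only [Finset.mul_sum, Finset.sum_mul]
        rw [Finset.sum_comm]
        apply Finset.sum_congr rfl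
        intro i _
        apply Finset.sum_congr rfl
        intro r _
        ring
      rw [step3]
      rw [← Fintype.sum_subtype_add_sum_subtype (fun i => f i ≠ 0)
        (fun i => (∑ r : Fin rR, w r * HR r i) * f i g)]
      have hz : ∑ i : {i : Fin nR // ¬ f i ≠ 0},
          (∑ r : Fin rR, w r * HR r i.1) * f i.1 g = 0 := by
        apply Finset.sum_eq_zero
        intro i _
        have : f i.1 = 0 := not_not.mp i.2
        rw [congrFun this g]
        simp
      rw [hz, add_zero]
      have hcoef : ∀ i : A, (∑ r : Fin rR, w r * HR r i.1) = if i = jA then 1 else 0 := by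
        intro i
        have hwi := congrFun hw i
        simp only [Matrix.vecMul, dotProduct, hM, Pi.single_apply] at hwi
        exact hwi
      calc ∑ i : A, (∑ r : Fin rR, w r * HR r i.1) * f i.1 g
          = ∑ i : A, (if i = jA then 1 else 0) * f i.1 g := by
            apply Finset.sum_congr rfl
            intro i _
            rw [hcoef i]
        _ = f (Fin.castLE hkRnR j) g := by
            simp only [ite_mul, one_mul, zero_mul]
            rw [Finset.sum_ite_eq' _ jA]
            simp [hjA]
    -- the cleaned logical operator
    set u : Fin n → ZMod 2 := e1 j + Matrix.vecMul s S with hu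
    have hvm : Matrix.vecMul s S = Sᵀ.mulVec s := (Matrix.mulVec_transpose S s).symm
    have hterm1 : HX.mulVec (Matrix.vecMul s S) = T.mulVec (f (Fin.castLE hkRnR j)) := by
      rw [hvm, Matrix.mulVec_mulVec, hb1, ← Matrix.mulVec_mulVec, hs]
    have hterm2 : (αperp * JX).mulVec (Matrix.vecMul s S)
        = β.mulVec (f (Fin.castLE hkRnR j)) := by
      rw [hvm, Matrix.mulVec_mulVec, hb2, ← Matrix.mulVec_mulVec, hs]
    have hHXu : HX.mulVec u = 0 := by
      rw [hu, Matrix.mulVec_add, hterm1, ← Eq1 j]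
      funext x
      simp only [Pi.add_apply, Pi.zero_apply]
      exact CharTwo.add_self_eq_zero _
    have hJu : (αperp * JX).mulVec u ≠ 0 := by
      intro hcontra
      apply EqJ
      have := congrFun hcontra x0
      rw [hu, Matrix.mulVec_add, hterm2] at this
      simpa using this
    have hdu : d ≤ hammingNorm u := ha u hHXu hJu
    -- choice of row witness for the support of s
    have hsch : ∀ m : Fin nG, s m ≠ 0 → ∃ r, w r * e2 r m ≠ 0 := by
      intro m hm
      by_contra hc
      push_neg at hc
      apply hm
      rw [hsdef]
      exact Finset.sum_eq_zero fun r _ => hc r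
    set rch : Fin nG → Fin rR := fun m =>
      if h : ∃ r, w r * e2 r m ≠ 0 then h.choose else ⟨0, hrR⟩ with hrchdef
    have hrch2 : ∀ m : Fin nG, s m ≠ 0 → e2 (rch m) m ≠ 0 := by
      intro m hm
      have h := hsch m hm
      simp only [hrchdef, dif_pos h]
      exact right_ne_zero_of_mul h.choose_spec
    have h3 : hammingNorm (e1 j) + hammingNorm s ≤ hammingNorm e := by
      apply ham_add_le_of_maps (e1 j) s e (fun m => Sum.inl (j, m))
        (fun m => Sum.inr (Sum.inl (rch m, m)))
      · intro a _ b _ hab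
        simp only [Sum.inl.injEq, Prod.mk.injEq] at hab
        exact hab.2
      · intro a _ b _ hab
        simp only [Sum.inr.injEq, Sum.inl.injEq, Prod.mk.injEq] at hab
        exact hab.2
      · intro i m h
        simp at h
      · intro m hm
        exact hm
      · intro m hm
        exact hrch2 m hm
    have h1 : hammingNorm u ≤ hammingNorm (e1 j) + hammingNorm (Matrix.vecMul s S) :=
      ham_add_le _ _
    have h2 : (hammingNorm (Matrix.vecMul s S) : ℝ) ≤ matNorm S * (hammingNorm s : ℝ) :=
      ham_vecMul_le S s
    have hN : 1 ≤ matNorm S := one_le_matNorm S hS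
    have hdu' : (d : ℝ) ≤ (hammingNorm u : ℝ) := by exact_mod_cast hdu
    have h1' : (hammingNorm u : ℝ) ≤ (hammingNorm (e1 j) : ℝ)
        + (hammingNorm (Matrix.vecMul s S) : ℝ) := by exact_mod_cast h1
    have h3' : (hammingNorm (e1 j) : ℝ) + (hammingNorm s : ℝ) ≤ (hammingNorm e : ℝ) := by
      exact_mod_cast h3
    have ha0 : (0:ℝ) ≤ (hammingNorm (e1 j) : ℝ) := Nat.cast_nonneg _
    have hstep : (d : ℝ) ≤ matNorm S * ((hammingNorm (e1 j) : ℝ) + (hammingNorm s : ℝ)) := by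
      nlinarith
    have hfin : matNorm S * ((hammingNorm (e1 j) : ℝ) + (hammingNorm s : ℝ))
        ≤ matNorm S * (hammingNorm e : ℝ) :=
      mul_le_mul_of_nonneg_left h3' (matNorm_nonneg S)
    linarith
end

section
/- Let n, k, k', r_Z, r_G, n_G, k_R, n_R, r_R, d be positive integers. Let H_Z ∈ 𝔽₂^{r_Z×n}, J_Z ∈ 𝔽₂^{k×n}, W ∈ 𝔽₂^{k'×k}, S ∈ 𝔽₂^{n_G×n}, H_G ∈ 𝔽₂^{r_G×n_G}, H_R ∈ 𝔽₂^{r_R×n_R}, and G_R^r ∈ 𝔽₂^{n_R×k_R}. Assume that every u ∈ 𝔽₂^n with H_Z uᵀ = 0 and J_Z uᵀ ≠ 0 satisfies |u| ≥ d. Define the block matrices H^D_Z = [[E_{k_R}⊗H_Z, 0, 0], [G_R^r⊗S, H_Rᵀ⊗E_{n_G}, E_{n_R}⊗H_Gᵀ]] and J^D_Z = (E_{k_R}⊗(W J_Z) | 0 | 0), whose columns are split into blocks of sizes k_R·n, r_R·n_G, and n_R·r_G. Then every e ∈ 𝔽₂^{k_R n + r_R n_G + n_R r_G} with H^D_Z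 eᵀ = 0 and J^D_Z eᵀ ≠ 0 satisfies |e| ≥ d. -/
open Matrix Kronecker

lemma norm_comp_le' {α β M : Type*} [Fintype α] [Fintype β] [DecidableEq M] [Zero M]
    (f : α → β) (hf : Function.Injective f) (v : β → M) :
    hammingNorm (v ∘ f) ≤ hammingNorm v := by
  unfold hammingNorm
  exact Finset.card_le_card_of_injOn f (fun x hx => by simpa using hx) hf.injOn

/-- X-distance bound for the deformed code of parallelized code surgery:
an X logical error of the deformed code has weight at least the distance `d`
of the underlying CSS code. -/
theorem stmt1
    (n k k' rZ rG nG kR nR rR d : ℕ)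
    (hn : 0 < n) (hk : 0 < k) (hk' : 0 < k') (hrZ : 0 < rZ) (hrG : 0 < rG)
    (hnG : 0 < nG) (hkR : 0 < kR) (hnR : 0 < nR) (hrR : 0 < rR) (hd : 0 < d)
    (HZ : Matrix (Fin rZ) (Fin n) (ZMod 2))
    (JZ : Matrix (Fin k) (Fin n) (ZMod 2))
    (W : Matrix (Fin k') (Fin k) (ZMod 2))
    (S : Matrix (Fin nG) (Fin n) (ZMod 2))
    (HG : Matrix (Fin rG) (Fin nG) (ZMod 2))
    (HR : Matrix (Fin rR) (Fin nR) (ZMod 2))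
    (GRr : Matrix (Fin nR) (Fin kR) (ZMod 2))
    (hdist : ∀ u : Fin n → ZMod 2,
      HZ.mulVec u = 0 → JZ.mulVec u ≠ 0 → d ≤ hammingNorm u) :
    ∀ e : (Fin kR × Fin n) ⊕ ((Fin rR × Fin nG) ⊕ (Fin nR × Fin rG)) → ZMod 2,
      (Matrix.fromBlocks
        ((1 : Matrix (Fin kR) (Fin kR) (ZMod 2)) ⊗ₖ HZ)
        (0 : Matrix (Fin kR × Fin rZ) ((Fin rR × Fin nG) ⊕ (Fin nR × Fin rG)) (ZMod 2))
        (GRr ⊗ₖ S)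
        (Matrix.fromCols (HRᵀ ⊗ₖ (1 : Matrix (Fin nG) (Fin nG) (ZMod 2)))
          ((1 : Matrix (Fin nR) (Fin nR) (ZMod 2)) ⊗ₖ HGᵀ))).mulVec e = 0 →
      (Matrix.fromCols
        ((1 : Matrix (Fin kR) (Fin kR) (ZMod 2)) ⊗ₖ (W * JZ))
        (0 : Matrix (Fin kR × Fin k') ((Fin rR × Fin nG) ⊕ (Fin nR × Fin rG)) (ZMod 2))).mulVec e ≠ 0 →
      d ≤ hammingNorm e := by
  intro e hH hJ
  set u : Fin kR → Fin n → ZMod 2 := fun i c => e (Sum.inl (i, c)) with hu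
  -- each slice is in the kernel of HZ
  have hker : ∀ i, HZ.mulVec (u i) = 0 := by
    intro i
    funext r
    have := congrFun hH (Sum.inl (i, r))
    simp only [Matrix.mulVec, Matrix.fromBlocks, Matrix.of_apply, Sum.elim_inl,
      Fintype.sum_sum_type, Fintype.sum_prod_type, Matrix.kroneckerMap_apply,
      Matrix.one_apply, Matrix.zero_apply, zero_mul, Finset.sum_const_zero, add_zero,
      Pi.zero_apply, dotProduct] at this ⊢
    simpa [ite_mul, mul_assoc, Finset.sum_ite_eq, u] using this
  -- some slice has nonzero logical action
  have hlog : ∃ i, (W * JZ).mulVec (u i) ≠ 0 := by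
    by_contra h
    push_neg at h
    apply hJ
    funext p
    obtain ⟨i, r'⟩ := p
    have := congrFun (h i) r'
    simp only [Matrix.mulVec, dotProduct, Pi.zero_apply] at this ⊢
    simp only [Matrix.fromCols, Matrix.of_apply, Fintype.sum_sum_type,
      Fintype.sum_prod_type, Matrix.kroneckerMap_apply, Matrix.one_apply,
      Matrix.zero_apply, zero_mul, Finset.sum_const_zero, add_zero]
    simpa [Matrix.one_apply, ite_mul, Finset.sum_ite_eq, u] using this
  obtain ⟨i, hi⟩ := hlog
  have hJZ : JZ.mulVec (u i) ≠ 0 := by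
    intro h0
    apply hi
    rw [← Matrix.mulVec_mulVec, h0, Matrix.mulVec_zero]
  have hle : d ≤ hammingNorm (u i) := hdist (u i) (hker i) hJZ
  refine hle.trans ?_
  have : u i = e ∘ (fun c : Fin n => Sum.inl (i, c)) := rfl
  rw [this]
  exact norm_comp_le' _ (fun a b h => by simpa using h) e
end

section
/- Let r, n, m, d be positive integers. Let H ∈ 𝔽₂^{r×n} have full row rank r, and suppose every nonzero y ∈ 𝔽₂^n with H yᵀ = 0 satisfies |y| ≥ d. Then for every matrix B ∈ 𝔽₂^{m×n} that has fewer than d nonzero columns, there exists a right inverse H^r ∈ 𝔽₂^{n×r} of H (i.e., H H^r = E_r) such that B Hᵀ (H^r)ᵀ = B. -/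
open Matrix

/-- A right inverse of a full-rank parity-check matrix can be chosen adapted to
any matrix `B` whose support touches fewer than `d` columns, where `d` is the
minimum distance of the code `ker H`. -/
theorem stmt3
    (r n m d : ℕ) (hr : 0 < r) (hn : 0 < n) (hm : 0 < m) (hd : 0 < d)
    (H : Matrix (Fin r) (Fin n) (ZMod 2))
    (hrank : H.rank = r)
    (hdist : ∀ y : Fin n → ZMod 2, y ≠ 0 → H.mulVec y = 0 → d ≤ hammingNorm y) :
    ∀ B : Matrix (Fin m) (Fin n) (ZMod 2),
      (Finset.univ.filter fun j : Fin n => ∃ i : Fin m, B i j ≠ 0).card < d →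
      ∃ Hr : Matrix (Fin n) (Fin r) (ZMod 2),
        H * Hr = 1 ∧ B * Hᵀ * Hrᵀ = B := by
  intro B hB
  classical
  set S : Finset (Fin n) := Finset.univ.filter fun j : Fin n => ∃ i : Fin m, B i j ≠ 0 with hS
  set f : (Fin n → ZMod 2) →ₗ[ZMod 2] (Fin r → ZMod 2) := H.mulVecLin with hf
  -- f is surjective
  have hsurj : LinearMap.range f = ⊤ := by
    apply Submodule.eq_top_of_finrank_eq
    rw [← Matrix.rank, hrank]
    simp [Module.finrank_pi]
  -- The submodule of vectors supported in S
  let U : Submodule (ZMod 2) (Fin n → ZMod 2) :=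
    { carrier := {u | ∀ j, j ∉ S → u j = 0}
      add_mem' := fun hu hv j hj => by simp [hu j hj, hv j hj]
      zero_mem' := fun j _ => rfl
      smul_mem' := fun c u hu j hj => by simp [hu j hj] }
  -- any element of U killed by f is zero
  have hUker : ∀ u ∈ U, f u = 0 → u = 0 := by
    intro u hu hfu
    by_contra hne
    have hle : d ≤ hammingNorm u := hdist u hne hfu
    have hsub : ({i | u i ≠ 0} : Finset (Fin n)) ⊆ S := by
      intro j hj
      by_contra hjS
      have hz : u j = 0 := hu j hjS
      simp [hz] at hj
    have : hammingNorm u ≤ S.card := by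
      simpa [hammingNorm] using Finset.card_le_card hsub
    omega
  have hinj : Function.Injective (f.domRestrict U) := by
    intro u v huv
    have : f ((u : Fin n → ZMod 2) - v) = 0 := by
      simp only [map_sub]
      simp only [LinearMap.domRestrict_apply] at huv
      rw [huv, sub_self]
    have heq : (u : Fin n → ZMod 2) - v = 0 :=
      hUker _ (U.sub_mem u.2 v.2) this
    exact Subtype.ext (sub_eq_zero.mp heq)
  set F : Submodule (ZMod 2) (Fin r → ZMod 2) := LinearMap.range (f.domRestrict U) with hF
  set e : U ≃ₗ[ZMod 2] F := LinearEquiv.ofInjective (f.domRestrict U) hinj with he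
  obtain ⟨V, hV⟩ := Submodule.exists_isCompl F
  set prj : (Fin r → ZMod 2) →ₗ[ZMod 2] F := F.linearProjOfIsCompl V hV with hprj
  obtain ⟨s, hs⟩ := f.exists_rightInverse_of_surjective hsurj
  have hsapp : ∀ x, f (s x) = x := fun x => congrFun (congrArg DFunLike.coe hs) x
  set g : (Fin r → ZMod 2) →ₗ[ZMod 2] (Fin n → ZMod 2) :=
    U.subtype.comp (e.symm.toLinearMap.comp prj) +
      s.comp (LinearMap.id - F.subtype.comp prj) with hg
  -- f (e.symm y) = y
  have hfe : ∀ y : F, f ((e.symm y : U) : Fin n → ZMod 2) = (y : Fin r → ZMod 2) := by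
    intro y
    have : ((e (e.symm y) : F) : Fin r → ZMod 2) = (y : Fin r → ZMod 2) := by
      rw [e.apply_symm_apply]
    rw [← this, he]
    rw [LinearEquiv.ofInjective_apply]
    rfl
  have hfg : ∀ x, f (g x) = x := by
    intro x
    simp only [hg, LinearMap.add_apply, LinearMap.comp_apply, LinearMap.sub_apply,
      LinearMap.id_apply, Submodule.subtype_apply, LinearEquiv.coe_coe, map_add]
    rw [hfe, hsapp]
    abel
  have hgf : ∀ u : Fin n → ZMod 2, u ∈ U → g (f u) = u := by
    intro u hu
    have hmem : f u ∈ F := ⟨⟨u, hu⟩, rfl⟩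
    have hpr : prj (f u) = ⟨f u, hmem⟩ :=
      Submodule.linearProjOfIsCompl_apply_left hV ⟨f u, hmem⟩
    have hesymm : e.symm ⟨f u, hmem⟩ = ⟨u, hu⟩ := by
      apply e.injective
      rw [e.apply_symm_apply]
      apply Subtype.ext
      rw [he, LinearEquiv.ofInjective_apply]
      rfl
    simp only [hg, LinearMap.add_apply, LinearMap.comp_apply, LinearMap.sub_apply,
      LinearMap.id_apply, Submodule.subtype_apply, LinearEquiv.coe_coe, hpr, hesymm,
      sub_self, map_zero, add_zero]
  refine ⟨LinearMap.toMatrix' g, ?_, ?_⟩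
  · apply Matrix.toLin'.injective
    rw [Matrix.toLin'_mul, Matrix.toLin'_toMatrix', Matrix.toLin'_one]
    apply LinearMap.ext
    intro x
    have : Matrix.toLin' H = f := by
      apply LinearMap.ext; intro v; rw [Matrix.toLin'_apply]; rfl
    simp [this, hfg x]
  · set Hr := LinearMap.toMatrix' g with hHr
    have hrow : ∀ i, Hr.mulVec (H.mulVec (B i)) = B i := by
      intro i
      have hBi : (B i : Fin n → ZMod 2) ∈ U := by
        intro j hj
        simp only [hS, Finset.mem_filter, Finset.mem_univ, true_and, not_exists,
          not_not] at hj
        exact hj i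
      have : Hr.mulVec = g := by
        funext v
        rw [hHr, ← Matrix.toLin'_apply, Matrix.toLin'_toMatrix']
      rw [this]
      exact hgf (B i) hBi
    have hT : Hr * H * Bᵀ = Bᵀ := by
      ext j i
      have := congrFun (hrow i) j
      simp only [Matrix.mulVec_mulVec] at this
      simpa [Matrix.mul_apply, Matrix.mulVec, dotProduct, Matrix.transpose_apply]
        using this
    have := congrArg Matrix.transpose hT
    simpa [Matrix.transpose_mul, Matrix.mul_assoc] using this
end

section
/- Let n, r_X, r_Z, n_G, r_G, r_M be positive integers. Let H_X ∈ 𝔽₂^{r_X×n}, H_Z ∈ 𝔽₂^{r_Z×n}, S ∈ 𝔽₂^{n_G×n}, T ∈ 𝔽₂^{r_X×r_G}, H_G ∈ 𝔽₂^{r_G×n_G}, and H_M ∈ 𝔽₂^{r_M×r_G}. Assume H_X H_Zᵀ = 0, H_X Sᵀ = T H_G, and H_M H_G = 0. Define the block matrices H^D_X = [[H_X, T], [0, H_M]] (columns split into blocks of sizes n and r_G) and H^D_Z = [[H_Z, 0], [S, H_Gᵀ]] (columns split into blocks of sizes n and r_G). Then H^D_X (H^D_Z)ᵀ = 0. -/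
open Matrix

/-- The deformed code constructed in code surgery is a valid CSS code:
`H^D_X (H^D_Z)ᵀ = 0`. -/
theorem stmt5
    (n rX rZ nG rG rM : ℕ)
    (hn : 0 < n) (hrX : 0 < rX) (hrZ : 0 < rZ) (hnG : 0 < nG)
    (hrG : 0 < rG) (hrM : 0 < rM)
    (HX : Matrix (Fin rX) (Fin n) (ZMod 2))
    (HZ : Matrix (Fin rZ) (Fin n) (ZMod 2))
    (S : Matrix (Fin nG) (Fin n) (ZMod 2))
    (T : Matrix (Fin rX) (Fin rG) (ZMod 2))
    (HG : Matrix (Fin rG) (Fin nG) (ZMod 2))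
    (HM : Matrix (Fin rM) (Fin rG) (ZMod 2))
    (h1 : HX * HZᵀ = 0)
    (h2 : HX * Sᵀ = T * HG)
    (h3 : HM * HG = 0) :
    Matrix.fromBlocks HX T 0 HM * (Matrix.fromBlocks HZ 0 S HGᵀ)ᵀ = 0 := by
  rw [Matrix.fromBlocks_transpose, Matrix.transpose_transpose, Matrix.transpose_zero,
    Matrix.fromBlocks_multiply, h2]
  have : T * HG + T * HG = 0 := by ext i j; simp [Matrix.add_apply, CharTwo.add_self_eq_zero]
  simp [h1, h3, this]
end

section
/- Let n, k, q, r_X, r_Z, n_G, r_G, r_M be positive integers with q < k. Let H_X ∈ 𝔽₂^{r_X×n}, H_Z ∈ 𝔽₂^{r_Z×n}, J_X, J_Z ∈ 𝔽₂^{k×n}, S ∈ 𝔽₂^{n_G×n}, T ∈ 𝔽₂^{r_X×r_G}, H_G ∈ 𝔽₂^{r_G×n_G}, H_M ∈ 𝔽₂^{r_M×r_G}, α_⊥ ∈ 𝔽₂^{(k−q)×k}, α_⊥^r ∈ 𝔽₂^{k×(k−q)}, and β ∈ 𝔽₂^{(k−q)×r_G}. Assume H_X J_Zᵀ = 0, H_Z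 J_Xᵀ = 0 (equivalently J_X H_Zᵀ = 0), J_X J_Zᵀ = E_k, α_⊥ α_⊥^r = E_{k−q}, and (α_⊥ J_X) Sᵀ = β H_G. Define H^D_X = [[H_X, T], [0, H_M]], H^D_Z = [[H_Z, 0], [S, H_Gᵀ]], J^D_X = (α_⊥ J_X | β), and J^D_Z = ((α_⊥^r)ᵀ J_Z | 0) (columns split into blocks of sizes n and r_G). Then H^D_X (J^D_Z)ᵀ = 0, H^D_Z (J^D_X)ᵀ = 0, and J^D_X (J^D_Z)ᵀ = E_{k−q}. -/
open Matrix

/-- After code surgery measuring `q` logical Z operators, `J^D_X` and `J^D_Z`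
are valid generator matrices of the X and Z logical operators of the deformed
code. -/
theorem stmt6
    (n k q rX rZ nG rG rM : ℕ)
    (hn : 0 < n) (hk : 0 < k) (hq : 0 < q) (hrX : 0 < rX) (hrZ : 0 < rZ)
    (hnG : 0 < nG) (hrG : 0 < rG) (hrM : 0 < rM) (hqk : q < k)
    (HX : Matrix (Fin rX) (Fin n) (ZMod 2))
    (HZ : Matrix (Fin rZ) (Fin n) (ZMod 2))
    (JX : Matrix (Fin k) (Fin n) (ZMod 2))
    (JZ : Matrix (Fin k) (Fin n) (ZMod 2))
    (S : Matrix (Fin nG) (Fin n) (ZMod 2))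
    (T : Matrix (Fin rX) (Fin rG) (ZMod 2))
    (HG : Matrix (Fin rG) (Fin nG) (ZMod 2))
    (HM : Matrix (Fin rM) (Fin rG) (ZMod 2))
    (αperp : Matrix (Fin (k - q)) (Fin k) (ZMod 2))
    (αperpr : Matrix (Fin k) (Fin (k - q)) (ZMod 2))
    (β : Matrix (Fin (k - q)) (Fin rG) (ZMod 2))
    (h1 : HX * JZᵀ = 0)
    (h2 : JX * HZᵀ = 0)
    (h3 : JX * JZᵀ = 1)
    (h4 : αperp * αperpr = 1)
    (h5 : (αperp * JX) * Sᵀ = β * HG) :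
    Matrix.fromBlocks HX T 0 HM
        * (Matrix.fromCols (αperprᵀ * JZ)
            (0 : Matrix (Fin (k - q)) (Fin rG) (ZMod 2)))ᵀ = 0
    ∧ Matrix.fromBlocks HZ 0 S HGᵀ
        * (Matrix.fromCols (αperp * JX) β)ᵀ = 0
    ∧ Matrix.fromCols (αperp * JX) β
        * (Matrix.fromCols (αperprᵀ * JZ)
            (0 : Matrix (Fin (k - q)) (Fin rG) (ZMod 2)))ᵀ = 1 := by
  have key2 : S * (αperp * JX)ᵀ + HGᵀ * βᵀ = 0 := by
    have h5' := congrArg Matrix.transpose h5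
    simp only [Matrix.transpose_mul, Matrix.transpose_transpose, Matrix.mul_assoc] at h5' ⊢
    rw [h5']
    ext i j
    simp [CharTwo.add_self_eq_zero]
  refine ⟨?_, ?_, ?_⟩
  · rw [Matrix.transpose_fromCols, Matrix.fromBlocks_mul_fromRows]
    rw [Matrix.transpose_mul, Matrix.transpose_transpose, ← Matrix.mul_assoc, h1]
    ext i j
    cases i <;> simp [Matrix.fromRows_apply_inl, Matrix.fromRows_apply_inr]
  · rw [Matrix.transpose_fromCols, Matrix.fromBlocks_mul_fromRows]
    have t1 : HZ * (αperp * JX)ᵀ = 0 := by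
      rw [Matrix.transpose_mul, ← Matrix.mul_assoc]
      have : HZ * JXᵀ = 0 := by
        have := congrArg Matrix.transpose h2
        simpa using this
      rw [this, Matrix.zero_mul]
    rw [t1, key2]
    ext i j
    cases i <;> simp [Matrix.fromRows_apply_inl, Matrix.fromRows_apply_inr]
  · rw [Matrix.transpose_fromCols, Matrix.fromCols_mul_fromRows]
    rw [Matrix.transpose_mul, Matrix.transpose_transpose, Matrix.mul_assoc,
      ← Matrix.mul_assoc JX, h3, Matrix.one_mul, h4]
    simp
end

section
/- Let n, k, q, r_X, n_G, r_G, k_R, n_R, r_R be positive integers with q ≤ k. Let H_X ∈ 𝔽₂^{r_X×n}, J_X, J_Z ∈ 𝔽₂^{k×n}, α ∈ 𝔽₂^{q×k}, α_⊥ ∈ 𝔽₂^{(k−q)×k}, S ∈ 𝔽₂^{n_G×n}, T ∈ 𝔽₂^{r_X×r_G}, H_G ∈ 𝔽₂^{r_G×n_G}, R ∈ 𝔽₂^{n×n_G}, β ∈ 𝔽₂^{(k−q)×r_G}, G_R ∈ 𝔽₂^{k_R×n_R}, G_R^r ∈ 𝔽₂^{n_R×k_R}, and H_R ∈ 𝔽₂^{r_R×n_R}.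 Assume: H_X Sᵀ = T H_G; (α J_Z) R S = α J_Z; H_G ((α J_Z) R)ᵀ = 0; (α_⊥ J_X) Sᵀ = β H_G; G_R G_R^r = E_{k_R}; and G_R H_Rᵀ = 0. Define H̃_X = E_{k_R}⊗H_X, J̃_X = E_{k_R}⊗J_X, J̃_Z = E_{k_R}⊗J_Z, α̃ = E_{k_R}⊗α, α̃_⊥ = E_{k_R}⊗α_⊥, S̃ = G_R^r⊗S, T̃ = (0 | (G_R^r)ᵀ⊗T), H̃_G the vertical stack of H_R⊗E_{n_G} on top of E_{n_R}⊗H_G, H̃_M = (E_{r_R}⊗H_G | H_R⊗E_{r_G}), R̃ = G_R⊗R, and β̃ = (0 | (G_R^r)ᵀ⊗β). Then: (i) H̃_X S̃ᵀ = T̃ H̃_G; (ii) α̃ J̃_Z R̃ S̃ = α̃ J̃_Z; (iii) H̃_G (α̃ J̃_Z R̃)ᵀ = 0; (iv) α̃_⊥ J̃_X S̃ᵀ = β̃ H̃_G; (v) H̃_M H̃_G = 0. -/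
open Matrix Kronecker

/-- The Kronecker-product lifting of the code-surgery data by a classical code
with generator matrix `G_R` and check matrix `H_R` again satisfies the code
surgery conditions (parallelized code surgery). -/
theorem stmt7
    (n k q rX nG rG kR nR rR : ℕ)
    (hn : 0 < n) (hk : 0 < k) (hq : 0 < q) (hrX : 0 < rX) (hnG : 0 < nG)
    (hrG : 0 < rG) (hkR : 0 < kR) (hnR : 0 < nR) (hrR : 0 < rR) (hqk : q ≤ k)
    (HX : Matrix (Fin rX) (Fin n) (ZMod 2))
    (JX : Matrix (Fin k) (Fin n) (ZMod 2))
    (JZ : Matrix (Fin k) (Fin n) (ZMod 2))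
    (α : Matrix (Fin q) (Fin k) (ZMod 2))
    (αperp : Matrix (Fin (k - q)) (Fin k) (ZMod 2))
    (S : Matrix (Fin nG) (Fin n) (ZMod 2))
    (T : Matrix (Fin rX) (Fin rG) (ZMod 2))
    (HG : Matrix (Fin rG) (Fin nG) (ZMod 2))
    (R : Matrix (Fin n) (Fin nG) (ZMod 2))
    (β : Matrix (Fin (k - q)) (Fin rG) (ZMod 2))
    (GR : Matrix (Fin kR) (Fin nR) (ZMod 2))
    (GRr : Matrix (Fin nR) (Fin kR) (ZMod 2))
    (HR : Matrix (Fin rR) (Fin nR) (ZMod 2))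
    (h1 : HX * Sᵀ = T * HG)
    (h2 : (α * JZ) * R * S = α * JZ)
    (h3 : HG * ((α * JZ) * R)ᵀ = 0)
    (h4 : (αperp * JX) * Sᵀ = β * HG)
    (h5 : GR * GRr = 1)
    (h6 : GR * HRᵀ = 0) :
    -- (i)  H̃_X S̃ᵀ = T̃ H̃_G
    (((1 : Matrix (Fin kR) (Fin kR) (ZMod 2)) ⊗ₖ HX) * (GRr ⊗ₖ S)ᵀ
      = Matrix.fromCols (0 : Matrix (Fin kR × Fin rX) (Fin rR × Fin nG) (ZMod 2))
          (GRrᵀ ⊗ₖ T)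
        * Matrix.fromRows (HR ⊗ₖ (1 : Matrix (Fin nG) (Fin nG) (ZMod 2)))
            ((1 : Matrix (Fin nR) (Fin nR) (ZMod 2)) ⊗ₖ HG))
    -- (ii)  α̃ J̃_Z R̃ S̃ = α̃ J̃_Z
    ∧ (((1 : Matrix (Fin kR) (Fin kR) (ZMod 2)) ⊗ₖ α)
        * ((1 : Matrix (Fin kR) (Fin kR) (ZMod 2)) ⊗ₖ JZ)
        * (GR ⊗ₖ R) * (GRr ⊗ₖ S)
      = ((1 : Matrix (Fin kR) (Fin kR) (ZMod 2)) ⊗ₖ α)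
        * ((1 : Matrix (Fin kR) (Fin kR) (ZMod 2)) ⊗ₖ JZ))
    -- (iii)  H̃_G (α̃ J̃_Z R̃)ᵀ = 0
    ∧ (Matrix.fromRows (HR ⊗ₖ (1 : Matrix (Fin nG) (Fin nG) (ZMod 2)))
          ((1 : Matrix (Fin nR) (Fin nR) (ZMod 2)) ⊗ₖ HG)
        * (((1 : Matrix (Fin kR) (Fin kR) (ZMod 2)) ⊗ₖ α)
            * ((1 : Matrix (Fin kR) (Fin kR) (ZMod 2)) ⊗ₖ JZ)
            * (GR ⊗ₖ R))ᵀ = 0)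
    -- (iv)  α̃_⊥ J̃_X S̃ᵀ = β̃ H̃_G
    ∧ (((1 : Matrix (Fin kR) (Fin kR) (ZMod 2)) ⊗ₖ αperp)
        * ((1 : Matrix (Fin kR) (Fin kR) (ZMod 2)) ⊗ₖ JX)
        * (GRr ⊗ₖ S)ᵀ
      = Matrix.fromCols
          (0 : Matrix (Fin kR × Fin (k - q)) (Fin rR × Fin nG) (ZMod 2))
          (GRrᵀ ⊗ₖ β)
        * Matrix.fromRows (HR ⊗ₖ (1 : Matrix (Fin nG) (Fin nG) (ZMod 2)))
            ((1 : Matrix (Fin nR) (Fin nR) (ZMod 2)) ⊗ₖ HG))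
    -- (v)  H̃_M H̃_G = 0
    ∧ (Matrix.fromCols ((1 : Matrix (Fin rR) (Fin rR) (ZMod 2)) ⊗ₖ HG)
          (HR ⊗ₖ (1 : Matrix (Fin rG) (Fin rG) (ZMod 2)))
        * Matrix.fromRows (HR ⊗ₖ (1 : Matrix (Fin nG) (Fin nG) (ZMod 2)))
            ((1 : Matrix (Fin nR) (Fin nR) (ZMod 2)) ⊗ₖ HG) = 0) := by
  have h6' : HR * GRᵀ = 0 := by
    have := congrArg Matrix.transpose h6
    simpa using this
  refine ⟨?_, ?_, ?_, ?_, ?_⟩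
  · rw [← Matrix.kroneckerMap_transpose, Matrix.fromCols_mul_fromRows,
      Matrix.zero_mul, zero_add, ← Matrix.mul_kronecker_mul, ← Matrix.mul_kronecker_mul]
    simp only [Matrix.one_mul, Matrix.mul_one, h1]
  · rw [← Matrix.mul_kronecker_mul, ← Matrix.mul_kronecker_mul, ← Matrix.mul_kronecker_mul]
    simp only [Matrix.one_mul, Matrix.mul_assoc]
    rw [← Matrix.mul_assoc α, ← Matrix.mul_assoc _ R S, h2, h5]
  · rw [← Matrix.mul_kronecker_mul, ← Matrix.mul_kronecker_mul,
      ← Matrix.kroneckerMap_transpose, Matrix.fromRows_mul,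
      ← Matrix.mul_kronecker_mul, ← Matrix.mul_kronecker_mul]
    simp only [Matrix.one_mul, Matrix.mul_one, Matrix.transpose_one]
    rw [h6', h3, Matrix.zero_kronecker, Matrix.kronecker_zero, Matrix.fromRows_zero]
  · rw [← Matrix.mul_kronecker_mul, ← Matrix.kroneckerMap_transpose,
      ← Matrix.mul_kronecker_mul, Matrix.fromCols_mul_fromRows,
      Matrix.zero_mul, zero_add, ← Matrix.mul_kronecker_mul]
    simp only [Matrix.one_mul, Matrix.mul_one, Matrix.transpose_one, h4]
  · rw [Matrix.fromCols_mul_fromRows, ← Matrix.mul_kronecker_mul,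
      ← Matrix.mul_kronecker_mul]
    simp only [Matrix.one_mul, Matrix.mul_one]
    ext i j
    simp only [Matrix.add_apply, Matrix.zero_apply]
    exact CharTwo.add_self_eq_zero _
end

section
/- Let n, k, q, r_Z, n_G, r_G, k_R, n_R, r_R be positive integers with q ≤ k. Let H_Z ∈ 𝔽₂^{r_Z×n}, J_Z ∈ 𝔽₂^{k×n}, α ∈ 𝔽₂^{q×k}, S ∈ 𝔽₂^{n_G×n}, H_G ∈ 𝔽₂^{r_G×n_G}, R ∈ 𝔽₂^{n×n_G}, G_R ∈ 𝔽₂^{k_R×n_R}, G_R^r ∈ 𝔽₂^{n_R×k_R}, and H_R ∈ 𝔽₂^{r_R×n_R}. Assume G_R G_R^r = E_{k_R}, G_R H_Rᵀ = 0, (α J_Z) R S = α J_Z, and H_G ((α J_Z) R)ᵀ = 0. Define H^D_Z = [[E_{k_R}⊗H_Z, 0, 0], [G_R^r⊗S, H_Rᵀ⊗E_{n_G}, E_{n_R}⊗H_Gᵀ]], whose rows are split into blocks of sizes k_R·r_Z and n_R·n_G and whose columns are split into blocks of sizes k_R·n, r_R·n_G, and n_R·r_G. Then (0 | G_R⊗((α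 J_Z) R)) · H^D_Z = (E_{k_R}⊗(α J_Z) | 0 | 0), where the left factor has column blocks of sizes k_R·r_Z and n_R·n_G matching the row blocks of H^D_Z. -/
open Matrix Kronecker

/-- In parallelized code surgery the measured logical operators
`E_{k_R} ⊗ (α J_Z)` lie in the row space of the Z check matrix `H^D_Z` of the
deformed code, via the explicit left factor `(0 | G_R ⊗ ((α J_Z) R))`. -/
theorem stmt8
    (n k q rZ nG rG kR nR rR : ℕ)
    (hn : 0 < n) (hk : 0 < k) (hq : 0 < q) (hrZ : 0 < rZ) (hnG : 0 < nG)
    (hrG : 0 < rG) (hkR : 0 < kR) (hnR : 0 < nR) (hrR : 0 < rR) (hqk : q ≤ k)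
    (HZ : Matrix (Fin rZ) (Fin n) (ZMod 2))
    (JZ : Matrix (Fin k) (Fin n) (ZMod 2))
    (α : Matrix (Fin q) (Fin k) (ZMod 2))
    (S : Matrix (Fin nG) (Fin n) (ZMod 2))
    (HG : Matrix (Fin rG) (Fin nG) (ZMod 2))
    (R : Matrix (Fin n) (Fin nG) (ZMod 2))
    (GR : Matrix (Fin kR) (Fin nR) (ZMod 2))
    (GRr : Matrix (Fin nR) (Fin kR) (ZMod 2))
    (HR : Matrix (Fin rR) (Fin nR) (ZMod 2))
    (h1 : GR * GRr = 1)
    (h2 : GR * HRᵀ = 0)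
    (h3 : (α * JZ) * R * S = α * JZ)
    (h4 : HG * ((α * JZ) * R)ᵀ = 0) :
    Matrix.fromCols
        (0 : Matrix (Fin kR × Fin q) (Fin kR × Fin rZ) (ZMod 2))
        (GR ⊗ₖ ((α * JZ) * R))
      * Matrix.fromBlocks
          ((1 : Matrix (Fin kR) (Fin kR) (ZMod 2)) ⊗ₖ HZ)
          (0 : Matrix (Fin kR × Fin rZ) ((Fin rR × Fin nG) ⊕ (Fin nR × Fin rG)) (ZMod 2))
          (GRr ⊗ₖ S)
          (Matrix.fromCols (HRᵀ ⊗ₖ (1 : Matrix (Fin nG) (Fin nG) (ZMod 2)))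
            ((1 : Matrix (Fin nR) (Fin nR) (ZMod 2)) ⊗ₖ HGᵀ))
    = Matrix.fromCols
        ((1 : Matrix (Fin kR) (Fin kR) (ZMod 2)) ⊗ₖ (α * JZ))
        (0 : Matrix (Fin kR × Fin q) ((Fin rR × Fin nG) ⊕ (Fin nR × Fin rG)) (ZMod 2)) := by
  rw [Matrix.fromCols_mul_fromBlocks, Matrix.mul_fromCols,
    Matrix.zero_mul, Matrix.zero_mul, zero_add, zero_add,
    ← Matrix.mul_kronecker_mul, ← Matrix.mul_kronecker_mul, ← Matrix.mul_kronecker_mul,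
    h1, h2, h3]
  have h5 : (α * JZ) * R * HGᵀ = 0 := by
    have := congrArg Matrix.transpose h4
    simpa using this
  rw [h5, Matrix.zero_kronecker, Matrix.kronecker_zero, Matrix.fromCols_zero]
end

section
/- Let w_Q, w_G, w_R be positive integers. Suppose the matrices H_X ∈ 𝔽₂^{r_X×n} and H_Z ∈ 𝔽₂^{r_Z×n} have all row and column Hamming weights at most w_Q; the matrices H_G ∈ 𝔽₂^{r_G×n_G}, S ∈ 𝔽₂^{n_G×n}, and T ∈ 𝔽₂^{r_X×r_G} have all row and column Hamming weights at most w_G; the matrix H_R ∈ 𝔽₂^{r_R×n_R} has all row and column Hamming weights at most w_R; and G_R^r ∈ 𝔽₂^{n_R×k_R} is the matrix whose transpose is (E_{k_R} | 0). Define H^D_X = [[E_{k_R}⊗H_X, 0, (G_R^r)ᵀ⊗T], [0, E_{r_R}⊗H_G, H_R⊗E_{r_G}]] and H^D_Z = [[E_{k_R}⊗H_Z, 0, 0], [G_R^r⊗S, H_Rᵀ⊗E_{n_G}, E_{n_R}⊗H_Gᵀ]]. Then every row and every column of H^D_X and of H^D_Z has Hamming weight at most w_Q + w_R + 2·w_G.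 -/
open Matrix Kronecker

section helpers
set_option linter.unusedSectionVars false
variable {α β : Type*} [Fintype α] [Fintype β]

lemma hn_sum (f : α ⊕ β → ZMod 2) :
    hammingNorm f = hammingNorm (f ∘ Sum.inl) + hammingNorm (f ∘ Sum.inr) := by
  classical
  simp only [hammingNorm]
  rw [← Finset.card_disjSum]
  congr 1
  ext x
  cases x <;> simp

lemma hn_mul (a : α → ZMod 2) (b : β → ZMod 2) :
    hammingNorm (fun p : α × β => a p.1 * b p.2) ≤ hammingNorm a * hammingNorm b := by
  classical
  simp only [hammingNorm]
  rw [← Finset.card_product]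
  apply Finset.card_le_card
  intro p hp
  simp only [Finset.mem_filter, Finset.mem_univ, true_and, Finset.mem_product] at *
  exact ⟨fun h => hp (by rw [h, zero_mul]), fun h => hp (by rw [h, mul_zero])⟩

lemma hn_le_one (f : α → ZMod 2) (h : ∀ a b, f a ≠ 0 → f b ≠ 0 → a = b) :
    hammingNorm f ≤ 1 := by
  classical
  apply Finset.card_le_one.mpr
  intro a ha b hb
  simp only [Finset.mem_filter] at ha hb
  exact h a b ha.2 hb.2

lemma hn_one_row [DecidableEq α] (i : α) :
    hammingNorm ((1 : Matrix α α (ZMod 2)) i) ≤ 1 := by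
  apply hn_le_one
  intro a b ha hb
  simp only [Matrix.one_apply, ne_eq, ite_eq_right_iff, not_forall] at ha hb
  rw [← ha.1, ← hb.1]

lemma hn_one_col [DecidableEq α] (j : α) :
    hammingNorm ((1 : Matrix α α (ZMod 2))ᵀ j) ≤ 1 := by
  rw [Matrix.transpose_one]
  exact hn_one_row j

lemma hn_kron_row {α' β' : Type*} [Fintype α'] [Fintype β']
    (A : Matrix α α' (ZMod 2)) (B : Matrix β β' (ZMod 2)) (i : α × β) :
    hammingNorm ((A ⊗ₖ B) i) ≤ hammingNorm (A i.1) * hammingNorm (B i.2) := by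
  have h : (A ⊗ₖ B) i = fun p : α' × β' => A i.1 p.1 * B i.2 p.2 := by funext p; rfl
  rw [h]; exact hn_mul _ _

lemma hn_kron_col {α' β' : Type*} [Fintype α'] [Fintype β']
    (A : Matrix α' α (ZMod 2)) (B : Matrix β' β (ZMod 2)) (j : α × β) :
    hammingNorm ((A ⊗ₖ B)ᵀ j) ≤ hammingNorm (Aᵀ j.1) * hammingNorm (Bᵀ j.2) := by
  have h : (A ⊗ₖ B)ᵀ j = fun p : α' × β' => Aᵀ j.1 p.1 * Bᵀ j.2 p.2 := by funext p; rfl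
  rw [h]; exact hn_mul _ _

lemma hn_zero_fun : hammingNorm (fun _ : α => (0 : ZMod 2)) = 0 := hammingNorm_zero

end helpers

/-- The X check matrix of the deformed code of parallelized code surgery. -/
def deformedHX {n rX nG rG kR nR rR : ℕ}
    (HX : Matrix (Fin rX) (Fin n) (ZMod 2))
    (HG : Matrix (Fin rG) (Fin nG) (ZMod 2))
    (T : Matrix (Fin rX) (Fin rG) (ZMod 2))
    (HR : Matrix (Fin rR) (Fin nR) (ZMod 2))
    (GRr : Matrix (Fin nR) (Fin kR) (ZMod 2)) :
    Matrix ((Fin kR × Fin rX) ⊕ (Fin rR × Fin rG))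
      ((Fin kR × Fin n) ⊕ ((Fin rR × Fin nG) ⊕ (Fin nR × Fin rG))) (ZMod 2) :=
  Matrix.fromBlocks
    ((1 : Matrix (Fin kR) (Fin kR) (ZMod 2)) ⊗ₖ HX)
    (Matrix.fromCols (0 : Matrix (Fin kR × Fin rX) (Fin rR × Fin nG) (ZMod 2))
      (GRrᵀ ⊗ₖ T))
    (0 : Matrix (Fin rR × Fin rG) (Fin kR × Fin n) (ZMod 2))
    (Matrix.fromCols ((1 : Matrix (Fin rR) (Fin rR) (ZMod 2)) ⊗ₖ HG)
      (HR ⊗ₖ (1 : Matrix (Fin rG) (Fin rG) (ZMod 2))))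

/-- The Z check matrix of the deformed code of parallelized code surgery. -/
def deformedHZ {n rZ nG rG kR nR rR : ℕ}
    (HZ : Matrix (Fin rZ) (Fin n) (ZMod 2))
    (HG : Matrix (Fin rG) (Fin nG) (ZMod 2))
    (S : Matrix (Fin nG) (Fin n) (ZMod 2))
    (HR : Matrix (Fin rR) (Fin nR) (ZMod 2))
    (GRr : Matrix (Fin nR) (Fin kR) (ZMod 2)) :
    Matrix ((Fin kR × Fin rZ) ⊕ (Fin nR × Fin nG))
      ((Fin kR × Fin n) ⊕ ((Fin rR × Fin nG) ⊕ (Fin nR × Fin rG))) (ZMod 2) :=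
  Matrix.fromBlocks
    ((1 : Matrix (Fin kR) (Fin kR) (ZMod 2)) ⊗ₖ HZ)
    (0 : Matrix (Fin kR × Fin rZ) ((Fin rR × Fin nG) ⊕ (Fin nR × Fin rG)) (ZMod 2))
    (GRr ⊗ₖ S)
    (Matrix.fromCols (HRᵀ ⊗ₖ (1 : Matrix (Fin nG) (Fin nG) (ZMod 2)))
      ((1 : Matrix (Fin nR) (Fin nR) (ZMod 2)) ⊗ₖ HGᵀ))

/-- qLDPC property of the deformed code: its check matrices inherit bounded
row and column weights from those of the constituent matrices. -/
theorem stmt10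
    (n rX rZ nG rG kR nR rR : ℕ) (wQ wG wR : ℕ)
    (hwQ : 0 < wQ) (hwG : 0 < wG) (hwR : 0 < wR)
    (HX : Matrix (Fin rX) (Fin n) (ZMod 2))
    (HZ : Matrix (Fin rZ) (Fin n) (ZMod 2))
    (HG : Matrix (Fin rG) (Fin nG) (ZMod 2))
    (S : Matrix (Fin nG) (Fin n) (ZMod 2))
    (T : Matrix (Fin rX) (Fin rG) (ZMod 2))
    (HR : Matrix (Fin rR) (Fin nR) (ZMod 2))
    (GRr : Matrix (Fin nR) (Fin kR) (ZMod 2))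
    (hHXrow : ∀ i, hammingNorm (HX i) ≤ wQ) (hHXcol : ∀ j, hammingNorm (HXᵀ j) ≤ wQ)
    (hHZrow : ∀ i, hammingNorm (HZ i) ≤ wQ) (hHZcol : ∀ j, hammingNorm (HZᵀ j) ≤ wQ)
    (hHGrow : ∀ i, hammingNorm (HG i) ≤ wG) (hHGcol : ∀ j, hammingNorm (HGᵀ j) ≤ wG)
    (hSrow : ∀ i, hammingNorm (S i) ≤ wG) (hScol : ∀ j, hammingNorm (Sᵀ j) ≤ wG)
    (hTrow : ∀ i, hammingNorm (T i) ≤ wG) (hTcol : ∀ j, hammingNorm (Tᵀ j) ≤ wG)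
    (hHRrow : ∀ i, hammingNorm (HR i) ≤ wR) (hHRcol : ∀ j, hammingNorm (HRᵀ j) ≤ wR)
    (hGRr : ∀ (i : Fin nR) (j : Fin kR), GRr i j = if (i : ℕ) = (j : ℕ) then 1 else 0) :
    (∀ i, hammingNorm (deformedHX HX HG T HR GRr i) ≤ wQ + wR + 2 * wG)
    ∧ (∀ j, hammingNorm ((deformedHX HX HG T HR GRr)ᵀ j) ≤ wQ + wR + 2 * wG)
    ∧ (∀ i, hammingNorm (deformedHZ HZ HG S HR GRr i) ≤ wQ + wR + 2 * wG)
    ∧ (∀ j, hammingNorm ((deformedHZ HZ HG S HR GRr)ᵀ j) ≤ wQ + wR + 2 * wG) := by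
  have hG1 : ∀ i : Fin nR, hammingNorm (GRr i) ≤ 1 := by
    intro i
    apply hn_le_one
    intro a b ha hb
    rw [hGRr] at ha hb
    simp only [ne_eq, ite_eq_right_iff, not_forall] at ha hb
    exact Fin.ext (ha.1 ▸ hb.1 ▸ rfl)
  have hG2 : ∀ j : Fin kR, hammingNorm (GRrᵀ j) ≤ 1 := by
    intro j
    apply hn_le_one
    intro a b ha hb
    simp only [Matrix.transpose_apply] at ha hb
    rw [hGRr] at ha hb
    have ha1 : (a : ℕ) = (j : ℕ) := by by_contra h; exact ha (if_neg h)
    have hb1 : (b : ℕ) = (j : ℕ) := by by_contra h; exact hb (if_neg h)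
    exact Fin.ext (ha1.trans hb1.symm)
  refine ⟨?_, ?_, ?_, ?_⟩
  · -- rows of deformedHX
    rintro (⟨k, x⟩ | ⟨r, g⟩)
    · rw [hn_sum]
      have h1 : hammingNorm
          ((deformedHX HX HG T HR GRr (Sum.inl (k, x))) ∘ Sum.inl) ≤ 1 * wQ := by
        have e : (deformedHX HX HG T HR GRr (Sum.inl (k, x))) ∘ Sum.inl
            = ((1 : Matrix (Fin kR) (Fin kR) (ZMod 2)) ⊗ₖ HX) (k, x) := rfl
        rw [e]
        exact le_trans (hn_kron_row _ _ _) (Nat.mul_le_mul (hn_one_row k) (hHXrow x))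
      have h2 : hammingNorm
          ((deformedHX HX HG T HR GRr (Sum.inl (k, x))) ∘ Sum.inr) ≤ 0 + 1 * wG := by
        have e : (deformedHX HX HG T HR GRr (Sum.inl (k, x))) ∘ Sum.inr
            = Matrix.fromCols (0 : Matrix (Fin kR × Fin rX) (Fin rR × Fin nG) (ZMod 2))
              (GRrᵀ ⊗ₖ T) (k, x) := rfl
        rw [e, hn_sum]
        have e1 : (Matrix.fromCols (0 : Matrix (Fin kR × Fin rX) (Fin rR × Fin nG) (ZMod 2))
            (GRrᵀ ⊗ₖ T) (k, x)) ∘ Sum.inl = fun _ => (0 : ZMod 2) := rfl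
        have e2 : (Matrix.fromCols (0 : Matrix (Fin kR × Fin rX) (Fin rR × Fin nG) (ZMod 2))
            (GRrᵀ ⊗ₖ T) (k, x)) ∘ Sum.inr = (GRrᵀ ⊗ₖ T) (k, x) := rfl
        rw [e1, e2, hn_zero_fun]
        exact Nat.add_le_add le_rfl
          (le_trans (hn_kron_row _ _ _) (Nat.mul_le_mul (hG2 k) (hTrow x)))
      omega
    · rw [hn_sum]
      have h1 : hammingNorm
          ((deformedHX HX HG T HR GRr (Sum.inr (r, g))) ∘ Sum.inl) = 0 := by
        have e : (deformedHX HX HG T HR GRr (Sum.inr (r, g))) ∘ Sum.inl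
            = fun _ => (0 : ZMod 2) := rfl
        rw [e, hn_zero_fun]
      have h2 : hammingNorm
          ((deformedHX HX HG T HR GRr (Sum.inr (r, g))) ∘ Sum.inr) ≤ 1 * wG + wR * 1 := by
        have e : (deformedHX HX HG T HR GRr (Sum.inr (r, g))) ∘ Sum.inr
            = Matrix.fromCols ((1 : Matrix (Fin rR) (Fin rR) (ZMod 2)) ⊗ₖ HG)
              (HR ⊗ₖ (1 : Matrix (Fin rG) (Fin rG) (ZMod 2))) (r, g) := rfl
        rw [e, hn_sum]
        have e1 : (Matrix.fromCols ((1 : Matrix (Fin rR) (Fin rR) (ZMod 2)) ⊗ₖ HG)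
            (HR ⊗ₖ (1 : Matrix (Fin rG) (Fin rG) (ZMod 2))) (r, g)) ∘ Sum.inl
            = ((1 : Matrix (Fin rR) (Fin rR) (ZMod 2)) ⊗ₖ HG) (r, g) := rfl
        have e2 : (Matrix.fromCols ((1 : Matrix (Fin rR) (Fin rR) (ZMod 2)) ⊗ₖ HG)
            (HR ⊗ₖ (1 : Matrix (Fin rG) (Fin rG) (ZMod 2))) (r, g)) ∘ Sum.inr
            = (HR ⊗ₖ (1 : Matrix (Fin rG) (Fin rG) (ZMod 2))) (r, g) := rfl
        rw [e1, e2]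
        exact Nat.add_le_add
          (le_trans (hn_kron_row _ _ _) (Nat.mul_le_mul (hn_one_row r) (hHGrow g)))
          (le_trans (hn_kron_row _ _ _) (Nat.mul_le_mul (hHRrow r) (hn_one_row g)))
      have : wR * 1 = wR := Nat.mul_one wR
      omega
  · -- columns of deformedHX
    rintro (⟨k, c⟩ | (⟨r, g'⟩ | ⟨nr, g⟩))
    · rw [hn_sum]
      have h1 : hammingNorm
          (((deformedHX HX HG T HR GRr)ᵀ (Sum.inl (k, c))) ∘ Sum.inl) ≤ 1 * wQ := by
        have e : ((deformedHX HX HG T HR GRr)ᵀ (Sum.inl (k, c))) ∘ Sum.inl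
            = ((1 : Matrix (Fin kR) (Fin kR) (ZMod 2)) ⊗ₖ HX)ᵀ (k, c) := rfl
        rw [e]
        exact le_trans (hn_kron_col _ _ _) (Nat.mul_le_mul (hn_one_col k) (hHXcol c))
      have h2 : hammingNorm
          (((deformedHX HX HG T HR GRr)ᵀ (Sum.inl (k, c))) ∘ Sum.inr) = 0 := by
        have e : ((deformedHX HX HG T HR GRr)ᵀ (Sum.inl (k, c))) ∘ Sum.inr
            = fun _ => (0 : ZMod 2) := rfl
        rw [e, hn_zero_fun]
      omega
    · rw [hn_sum]
      have h1 : hammingNorm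
          (((deformedHX HX HG T HR GRr)ᵀ (Sum.inr (Sum.inl (r, g')))) ∘ Sum.inl) = 0 := by
        have e : ((deformedHX HX HG T HR GRr)ᵀ (Sum.inr (Sum.inl (r, g')))) ∘ Sum.inl
            = fun _ => (0 : ZMod 2) := rfl
        rw [e, hn_zero_fun]
      have h2 : hammingNorm
          (((deformedHX HX HG T HR GRr)ᵀ (Sum.inr (Sum.inl (r, g')))) ∘ Sum.inr)
          ≤ 1 * wG := by
        have e : ((deformedHX HX HG T HR GRr)ᵀ (Sum.inr (Sum.inl (r, g')))) ∘ Sum.inr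
            = ((1 : Matrix (Fin rR) (Fin rR) (ZMod 2)) ⊗ₖ HG)ᵀ (r, g') := rfl
        rw [e]
        exact le_trans (hn_kron_col _ _ _) (Nat.mul_le_mul (hn_one_col r) (hHGcol g'))
      omega
    · rw [hn_sum]
      have h1 : hammingNorm
          (((deformedHX HX HG T HR GRr)ᵀ (Sum.inr (Sum.inr (nr, g)))) ∘ Sum.inl)
          ≤ 1 * wG := by
        have e : ((deformedHX HX HG T HR GRr)ᵀ (Sum.inr (Sum.inr (nr, g)))) ∘ Sum.inl
            = (GRrᵀ ⊗ₖ T)ᵀ (nr, g) := rfl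
        rw [e]
        refine le_trans (hn_kron_col _ _ _) ?_
        have e2 : (GRrᵀ)ᵀ = GRr := Matrix.transpose_transpose GRr
        rw [e2]
        exact Nat.mul_le_mul (hG1 nr) (hTcol g)
      have h2 : hammingNorm
          (((deformedHX HX HG T HR GRr)ᵀ (Sum.inr (Sum.inr (nr, g)))) ∘ Sum.inr)
          ≤ wR * 1 := by
        have e : ((deformedHX HX HG T HR GRr)ᵀ (Sum.inr (Sum.inr (nr, g)))) ∘ Sum.inr
            = (HR ⊗ₖ (1 : Matrix (Fin rG) (Fin rG) (ZMod 2)))ᵀ (nr, g) := rfl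
        rw [e]
        exact le_trans (hn_kron_col _ _ _) (Nat.mul_le_mul (hHRcol nr) (hn_one_col g))
      have : wR * 1 = wR := Nat.mul_one wR
      omega
  · -- rows of deformedHZ
    rintro (⟨k, z⟩ | ⟨nr, ng⟩)
    · rw [hn_sum]
      have h1 : hammingNorm
          ((deformedHZ HZ HG S HR GRr (Sum.inl (k, z))) ∘ Sum.inl) ≤ 1 * wQ := by
        have e : (deformedHZ HZ HG S HR GRr (Sum.inl (k, z))) ∘ Sum.inl
            = ((1 : Matrix (Fin kR) (Fin kR) (ZMod 2)) ⊗ₖ HZ) (k, z) := rfl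
        rw [e]
        exact le_trans (hn_kron_row _ _ _) (Nat.mul_le_mul (hn_one_row k) (hHZrow z))
      have h2 : hammingNorm
          ((deformedHZ HZ HG S HR GRr (Sum.inl (k, z))) ∘ Sum.inr) = 0 := by
        have e : (deformedHZ HZ HG S HR GRr (Sum.inl (k, z))) ∘ Sum.inr
            = fun _ => (0 : ZMod 2) := rfl
        rw [e, hn_zero_fun]
      omega
    · rw [hn_sum]
      have h1 : hammingNorm
          ((deformedHZ HZ HG S HR GRr (Sum.inr (nr, ng))) ∘ Sum.inl) ≤ 1 * wG := by
        have e : (deformedHZ HZ HG S HR GRr (Sum.inr (nr, ng))) ∘ Sum.inl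
            = (GRr ⊗ₖ S) (nr, ng) := rfl
        rw [e]
        exact le_trans (hn_kron_row _ _ _) (Nat.mul_le_mul (hG1 nr) (hSrow ng))
      have h2 : hammingNorm
          ((deformedHZ HZ HG S HR GRr (Sum.inr (nr, ng))) ∘ Sum.inr)
          ≤ wR * 1 + 1 * wG := by
        have e : (deformedHZ HZ HG S HR GRr (Sum.inr (nr, ng))) ∘ Sum.inr
            = Matrix.fromCols (HRᵀ ⊗ₖ (1 : Matrix (Fin nG) (Fin nG) (ZMod 2)))
              ((1 : Matrix (Fin nR) (Fin nR) (ZMod 2)) ⊗ₖ HGᵀ) (nr, ng) := rfl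
        rw [e, hn_sum]
        have e1 : (Matrix.fromCols (HRᵀ ⊗ₖ (1 : Matrix (Fin nG) (Fin nG) (ZMod 2)))
            ((1 : Matrix (Fin nR) (Fin nR) (ZMod 2)) ⊗ₖ HGᵀ) (nr, ng)) ∘ Sum.inl
            = (HRᵀ ⊗ₖ (1 : Matrix (Fin nG) (Fin nG) (ZMod 2))) (nr, ng) := rfl
        have e2 : (Matrix.fromCols (HRᵀ ⊗ₖ (1 : Matrix (Fin nG) (Fin nG) (ZMod 2)))
            ((1 : Matrix (Fin nR) (Fin nR) (ZMod 2)) ⊗ₖ HGᵀ) (nr, ng)) ∘ Sum.inr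
            = ((1 : Matrix (Fin nR) (Fin nR) (ZMod 2)) ⊗ₖ HGᵀ) (nr, ng) := rfl
        rw [e1, e2]
        exact Nat.add_le_add
          (le_trans (hn_kron_row _ _ _) (Nat.mul_le_mul (hHRcol nr) (hn_one_row ng)))
          (le_trans (hn_kron_row _ _ _) (Nat.mul_le_mul (hn_one_row nr) (hHGcol ng)))
      have : wR * 1 = wR := Nat.mul_one wR
      omega
  · -- columns of deformedHZ
    rintro (⟨k, c⟩ | (⟨r, ng⟩ | ⟨nr, g⟩))
    · rw [hn_sum]
      have h1 : hammingNorm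
          (((deformedHZ HZ HG S HR GRr)ᵀ (Sum.inl (k, c))) ∘ Sum.inl) ≤ 1 * wQ := by
        have e : ((deformedHZ HZ HG S HR GRr)ᵀ (Sum.inl (k, c))) ∘ Sum.inl
            = ((1 : Matrix (Fin kR) (Fin kR) (ZMod 2)) ⊗ₖ HZ)ᵀ (k, c) := rfl
        rw [e]
        exact le_trans (hn_kron_col _ _ _) (Nat.mul_le_mul (hn_one_col k) (hHZcol c))
      have h2 : hammingNorm
          (((deformedHZ HZ HG S HR GRr)ᵀ (Sum.inl (k, c))) ∘ Sum.inr) ≤ 1 * wG := by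
        have e : ((deformedHZ HZ HG S HR GRr)ᵀ (Sum.inl (k, c))) ∘ Sum.inr
            = (GRr ⊗ₖ S)ᵀ (k, c) := rfl
        rw [e]
        exact le_trans (hn_kron_col _ _ _) (Nat.mul_le_mul (hG2 k) (hScol c))
      omega
    · rw [hn_sum]
      have h1 : hammingNorm
          (((deformedHZ HZ HG S HR GRr)ᵀ (Sum.inr (Sum.inl (r, ng)))) ∘ Sum.inl) = 0 := by
        have e : ((deformedHZ HZ HG S HR GRr)ᵀ (Sum.inr (Sum.inl (r, ng)))) ∘ Sum.inl
            = fun _ => (0 : ZMod 2) := rfl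
        rw [e, hn_zero_fun]
      have h2 : hammingNorm
          (((deformedHZ HZ HG S HR GRr)ᵀ (Sum.inr (Sum.inl (r, ng)))) ∘ Sum.inr)
          ≤ wR * 1 := by
        have e : ((deformedHZ HZ HG S HR GRr)ᵀ (Sum.inr (Sum.inl (r, ng)))) ∘ Sum.inr
            = (HRᵀ ⊗ₖ (1 : Matrix (Fin nG) (Fin nG) (ZMod 2)))ᵀ (r, ng) := rfl
        rw [e]
        refine le_trans (hn_kron_col _ _ _) ?_
        rw [Matrix.transpose_transpose]
        exact Nat.mul_le_mul (hHRrow r) (hn_one_col ng)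
      have : wR * 1 = wR := Nat.mul_one wR
      omega
    · rw [hn_sum]
      have h1 : hammingNorm
          (((deformedHZ HZ HG S HR GRr)ᵀ (Sum.inr (Sum.inr (nr, g)))) ∘ Sum.inl) = 0 := by
        have e : ((deformedHZ HZ HG S HR GRr)ᵀ (Sum.inr (Sum.inr (nr, g)))) ∘ Sum.inl
            = fun _ => (0 : ZMod 2) := rfl
        rw [e, hn_zero_fun]
      have h2 : hammingNorm
          (((deformedHZ HZ HG S HR GRr)ᵀ (Sum.inr (Sum.inr (nr, g)))) ∘ Sum.inr)
          ≤ 1 * wG := by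
        have e : ((deformedHZ HZ HG S HR GRr)ᵀ (Sum.inr (Sum.inr (nr, g)))) ∘ Sum.inr
            = ((1 : Matrix (Fin nR) (Fin nR) (ZMod 2)) ⊗ₖ HGᵀ)ᵀ (nr, g) := rfl
        rw [e]
        refine le_trans (hn_kron_col _ _ _) ?_
        refine Nat.mul_le_mul (hn_one_col nr) ?_
        rw [Matrix.transpose_transpose]
        exact hHGrow g
      omega
end

section
/- Let C be a finite set, let (Ω, ℙ) be a probability space, and let F₁, F₂ : Ω → (subsets of C) be independent random subsets of C. Let p₁, p₂ ∈ [0, 1) and assume that for every subset S ⊆ C and each i ∈ {1, 2}, ℙ[S ⊆ F_i] ≤ p_i^{|S|}. Then for every subset S ⊆ C, ℙ[S ⊆ F₁ ∪ F₂] ≤ (p₁ + p₂ + p₁·p₂)^{|S|}. In particular, p₁ + p₂ + p₁·p₂ ≤ min{2p₁ + p₂, p₁ + 2p₂}. -/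
open MeasureTheory ProbabilityTheory

/-- Composition of two independent local stochastic error layers: the union of
two independent random fault sets with parameters `p₁` and `p₂` is a random
fault set with parameter `p₁ + p₂ + p₁ p₂ ≤ min {2p₁ + p₂, p₁ + 2p₂}`. -/
theorem stmt12
    {C : Type*} [Fintype C] [DecidableEq C]
    {Ω : Type*} [MeasurableSpace Ω] (μ : Measure Ω) [IsProbabilityMeasure μ]
    [MeasurableSpace (Finset C)] [MeasurableSingletonClass (Finset C)]
    (F₁ F₂ : Ω → Finset C) (hm₁ : Measurable F₁) (hm₂ : Measurable F₂)
    (hindep : IndepFun F₁ F₂ μ)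
    (p₁ p₂ : ℝ) (hp₁0 : 0 ≤ p₁) (hp₁1 : p₁ < 1) (hp₂0 : 0 ≤ p₂) (hp₂1 : p₂ < 1)
    (h₁ : ∀ S : Finset C, μ {ω | S ⊆ F₁ ω} ≤ ENNReal.ofReal (p₁ ^ S.card))
    (h₂ : ∀ S : Finset C, μ {ω | S ⊆ F₂ ω} ≤ ENNReal.ofReal (p₂ ^ S.card)) :
    (∀ S : Finset C,
      μ {ω | S ⊆ F₁ ω ∪ F₂ ω} ≤ ENNReal.ofReal ((p₁ + p₂ + p₁ * p₂) ^ S.card))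
    ∧ p₁ + p₂ + p₁ * p₂ ≤ min (2 * p₁ + p₂) (p₁ + 2 * p₂) := by
  constructor
  · intro S
    have hsub : {ω | S ⊆ F₁ ω ∪ F₂ ω} ⊆
        ⋃ T ∈ S.powerset, ({ω | T ⊆ F₁ ω} ∩ {ω | S \ T ⊆ F₂ ω}) := by
      intro ω hω
      refine Set.mem_biUnion (Finset.mem_powerset.2 (Finset.inter_subset_left (s₂ := F₁ ω))) ?_
      constructor
      · exact Finset.inter_subset_right
      · intro x hx
        have hxS := (Finset.mem_sdiff.1 hx).1
        have hx1 : x ∉ F₁ ω := fun h =>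
          (Finset.mem_sdiff.1 hx).2 (Finset.mem_inter.2 ⟨hxS, h⟩)
        rcases Finset.mem_union.1 (hω hxS) with h | h
        · exact absurd h hx1
        · exact h
    calc μ {ω | S ⊆ F₁ ω ∪ F₂ ω}
        ≤ ∑ T ∈ S.powerset, μ ({ω | T ⊆ F₁ ω} ∩ {ω | S \ T ⊆ F₂ ω}) :=
          le_trans (measure_mono hsub) (measure_biUnion_finset_le _ _)
      _ ≤ ∑ T ∈ S.powerset, ENNReal.ofReal (p₁ ^ T.card * p₂ ^ (S \ T).card) := by
          refine Finset.sum_le_sum fun T _ => ?_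
          have heq : μ ({ω | T ⊆ F₁ ω} ∩ {ω | S \ T ⊆ F₂ ω})
              = μ {ω | T ⊆ F₁ ω} * μ {ω | S \ T ⊆ F₂ ω} := by
            have : {ω | T ⊆ F₁ ω} = F₁ ⁻¹' {X | T ⊆ X} := rfl
            have h2 : {ω | S \ T ⊆ F₂ ω} = F₂ ⁻¹' {X | S \ T ⊆ X} := rfl
            rw [this, h2]
            exact hindep.measure_inter_preimage_eq_mul _ _
              (Set.to_countable _).measurableSet (Set.to_countable _).measurableSet
          rw [heq, ENNReal.ofReal_mul (by positivity)]
          exact mul_le_mul' (h₁ T) (h₂ (S \ T))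
      _ = ENNReal.ofReal (∑ T ∈ S.powerset, p₁ ^ T.card * p₂ ^ (S \ T).card) := by
          rw [ENNReal.ofReal_sum_of_nonneg]
          intro T _; positivity
      _ ≤ ENNReal.ofReal ((p₁ + p₂ + p₁ * p₂) ^ S.card) := by
          apply ENNReal.ofReal_le_ofReal
          have hkey : ∑ T ∈ S.powerset, p₁ ^ T.card * p₂ ^ (S \ T).card
              = (p₁ + p₂) ^ S.card := by
            have := Finset.prod_add (fun _ : C => p₁) (fun _ : C => p₂) S
            simp only [Finset.prod_const] at this
            rw [← this]
          rw [hkey]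
          apply pow_le_pow_left₀ (by positivity)
          nlinarith
  · refine le_min ?_ ?_ <;> nlinarith
end

section
/- Let G be a finite simple graph in which every vertex has degree at most z, where z ≥ 1 is an integer. Let S be a set of t ≥ 1 vertices of G. For every integer s ≥ t, the number of vertex sets W with S ⊆ W and |W| = s such that every connected component of the subgraph of G induced on W contains at least one vertex of S, is at most e^{t−1}·(z·e)^{s−t}, where e is Euler's number. -/
open SimpleGraph

set_option linter.unusedSectionVars false
set_option linter.unusedVariables false

namespace Stmt14
variable {V : Type*} [Fintype V] [DecidableEq V] (G : SimpleGraph V) [DecidableRel G.Adj]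
  (S W : Finset V)

noncomputable def sig (v : V) : ℕ := (Fintype.equivFin V v : ℕ)

lemma sig_lt (v : V) : sig v < Fintype.card V := (Fintype.equivFin V v).isLt

lemma sig_inj {v w : V} (h : sig v = sig w) : v = w := by
  have : Fintype.equivFin V v = Fintype.equivFin V w := Fin.ext h
  exact (Fintype.equivFin V).injective this

def ddSet (w : V) : Set ℕ :=
  {n | ∃ v ∈ S, ∃ p : G.Walk w v, (∀ x ∈ p.support, x ∈ W) ∧ p.length = n}

noncomputable def dd (w : V) : ℕ := sInf (ddSet G S W w)

def good (w : V) : Prop := (ddSet G S W w).Nonempty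

variable {G S W}

lemma dd_mem {w : V} (h : good G S W w) : dd G S W w ∈ ddSet G S W w := Nat.sInf_mem h

lemma dd_le' {w : V} {n : ℕ} (h : n ∈ ddSet G S W w) : dd G S W w ≤ n := Nat.sInf_le h

lemma zero_mem_ddSet {w : V} (hw : w ∈ W) (hS : w ∈ S) : (0:ℕ) ∈ ddSet G S W w := by
  refine ⟨w, hS, Walk.nil, ?_, rfl⟩
  intro x hx
  simp only [Walk.support_nil, List.mem_singleton] at hx
  subst hx; exact hw

lemma dd_zero_of_mem {w : V} (hw : w ∈ W) (hS : w ∈ S) : dd G S W w = 0 :=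
  Nat.le_zero.mp (dd_le' (zero_mem_ddSet hw hS))

lemma good_of_mem_S {w : V} (hw : w ∈ W) (hS : w ∈ S) : good G S W w :=
  ⟨0, zero_mem_ddSet hw hS⟩

lemma mem_S_of_dd_zero {w : V} (hg : good G S W w) (h0 : dd G S W w = 0) : w ∈ S := by
  obtain ⟨v, hv, p, hsupp, hlen⟩ := dd_mem hg
  rw [h0] at hlen
  exact (Walk.eq_of_length_eq_zero hlen) ▸ hv

lemma dd_le_adj {w u : V} (hw : w ∈ W) (h : G.Adj w u) (hu : good G S W u) :
    dd G S W w ≤ dd G S W u + 1 := by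
  obtain ⟨v, hv, p, hsupp, hlen⟩ := dd_mem hu
  refine dd_le' ⟨v, hv, Walk.cons h p, ?_, by simp [hlen]⟩
  intro x hx
  rw [Walk.support_cons] at hx
  rcases List.mem_cons.mp hx with rfl | hx
  · exact hw
  · exact hsupp x hx

lemma exists_parent {w : V} (hw : w ∈ W) (hg : good G S W w) (h0 : dd G S W w ≠ 0) :
    ∃ u, u ∈ W ∧ G.Adj w u ∧ dd G S W u + 1 = dd G S W w ∧ good G S W u := by
  obtain ⟨v, hv, p, hsupp, hlen⟩ := dd_mem hg
  cases p with
  | nil => simp at hlen; omega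
  | @cons _ u _ hadj q =>
    have hsuppq : ∀ x ∈ q.support, x ∈ W := by
      intro x hx
      exact hsupp x (by rw [Walk.support_cons]; exact List.mem_cons_of_mem _ hx)
    have huW : u ∈ W := hsuppq u q.start_mem_support
    have hgu : good G S W u := ⟨q.length, v, hv, q, hsuppq, rfl⟩
    have h1 : dd G S W u ≤ q.length := dd_le' ⟨v, hv, q, hsuppq, rfl⟩
    have h2 : dd G S W w ≤ dd G S W u + 1 := dd_le_adj hw hadj hgu
    have h3 : q.length + 1 = dd G S W w := by simpa [Walk.length_cons] using hlen
    exact ⟨u, huW, hadj, by omega, hgu⟩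

open Classical in
variable (G S W) in
noncomputable def par (w : V) : V :=
  if h : ∃ u, u ∈ W ∧ G.Adj w u ∧ dd G S W u + 1 = dd G S W w ∧ good G S W u
  then h.choose else w

lemma par_spec {w : V} (hw : w ∈ W) (hg : good G S W w) (h0 : dd G S W w ≠ 0) :
    par G S W w ∈ W ∧ G.Adj w (par G S W w) ∧ dd G S W (par G S W w) + 1 = dd G S W w ∧
      good G S W (par G S W w) := by
  have h := exists_parent hw hg h0
  rw [par, dif_pos h]
  exact h.choose_spec

variable (G S W) in
noncomputable def key (w : V) : ℕ := Fintype.card V * dd G S W w + sig w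

lemma key_inj {u w : V} (h : key G S W u = key G S W w) : u = w := by
  have h1 := sig_lt u
  have h2 := sig_lt w
  have hN : 0 < Fintype.card V := by omega
  simp only [key] at h
  have hd : dd G S W u = dd G S W w := by
    have h2' := congrArg (fun n => n / Fintype.card V) h
    simpa [Nat.mul_add_div hN, Nat.div_eq_of_lt h1, Nat.div_eq_of_lt h2] using h2'
  rw [hd] at h
  exact sig_inj (Nat.add_left_cancel h)

lemma key_lt_of_dd_lt {u w : V} (h : dd G S W u < dd G S W w) : key G S W u < key G S W w := by
  have h1 := sig_lt u
  rw [key, key]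
  calc Fintype.card V * dd G S W u + sig u < Fintype.card V * (dd G S W u + 1) := by
        rw [mul_add]; omega
    _ ≤ Fintype.card V * dd G S W w := Nat.mul_le_mul_left _ (by omega)
    _ ≤ _ := Nat.le_add_right _ _

lemma key_lt_iff_of_dd_eq {u w : V} (h : dd G S W u = dd G S W w) :
    (key G S W u < key G S W w ↔ sig u < sig w) := by
  rw [key, key, h]
  exact add_lt_add_iff_left _

lemma dd_le_of_key_lt {u w : V} (h : key G S W u < key G S W w) : dd G S W u ≤ dd G S W w := by
  by_contra hc
  push_neg at hc
  exact absurd (key_lt_of_dd_lt hc) (by omega)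

variable (G S W) in
noncomputable def pos (w : V) : ℕ := (W.filter (fun u => key G S W u < key G S W w)).card

lemma pos_lt {w : V} (hw : w ∈ W) : pos G S W w < W.card := by
  have hsub : W.filter (fun u => key G S W u < key G S W w) ⊆ W.erase w := by
    intro x hx
    rw [Finset.mem_filter] at hx
    refine Finset.mem_erase.mpr ⟨?_, hx.1⟩
    rintro rfl
    omega
  calc pos G S W w ≤ (W.erase w).card := Finset.card_le_card hsub
    _ < W.card := Finset.card_erase_lt_of_mem hw

lemma pos_injOn {u w : V} (hu : u ∈ W) (hw : w ∈ W) (h : pos G S W u = pos G S W w) : u = w := by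
  rcases lt_trichotomy (key G S W u) (key G S W w) with hk | hk | hk
  · exfalso
    have hss : W.filter (fun x => key G S W x < key G S W u) ⊂
        W.filter (fun x => key G S W x < key G S W w) := by
      refine Finset.ssubset_iff_of_subset ?_ |>.mpr ?_
      · intro x hx
        rw [Finset.mem_filter] at hx ⊢
        exact ⟨hx.1, lt_trans hx.2 hk⟩
      · exact ⟨u, Finset.mem_filter.mpr ⟨hu, hk⟩, by simp⟩
    have := Finset.card_lt_card hss
    rw [pos, pos] at h
    omega
  · exact key_inj hk
  · exfalso
    have hss : W.filter (fun x => key G S W x < key G S W w) ⊂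
        W.filter (fun x => key G S W x < key G S W u) := by
      refine Finset.ssubset_iff_of_subset ?_ |>.mpr ?_
      · intro x hx
        rw [Finset.mem_filter] at hx ⊢
        exact ⟨hx.1, lt_trans hx.2 hk⟩
      · exact ⟨w, Finset.mem_filter.mpr ⟨hw, hk⟩, by simp⟩
    have := Finset.card_lt_card hss
    rw [pos, pos] at h
    omega

variable (G) in
noncomputable def idx (u w : V) : ℕ :=
  ((G.neighborFinset u).filter (fun x => sig x < sig w)).card

lemma idx_lt {z : ℕ} (hdeg : ∀ v : V, G.degree v ≤ z) {u w : V} (h : G.Adj u w) :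
    idx G u w < z := by
  have hmem : w ∈ G.neighborFinset u := (G.mem_neighborFinset u w).mpr h
  have hsub : (G.neighborFinset u).filter (fun x => sig x < sig w) ⊆
      (G.neighborFinset u).erase w := by
    intro x hx
    rw [Finset.mem_filter] at hx
    refine Finset.mem_erase.mpr ⟨?_, hx.1⟩
    rintro rfl
    omega
  have h1 : idx G u w < (G.neighborFinset u).card :=
    lt_of_le_of_lt (Finset.card_le_card hsub) (Finset.card_erase_lt_of_mem hmem)
  have h2 : (G.neighborFinset u).card ≤ z := by
    rw [G.card_neighborFinset_eq_degree]
    exact hdeg u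
  omega

lemma idx_inj {u x y : V} (hx : G.Adj u x) (hy : G.Adj u y) (h : idx G u x = idx G u y) :
    x = y := by
  have hxm : x ∈ G.neighborFinset u := (G.mem_neighborFinset u x).mpr hx
  have hym : y ∈ G.neighborFinset u := (G.mem_neighborFinset u y).mpr hy
  rcases lt_trichotomy (sig x) (sig y) with hk | hk | hk
  · exfalso
    have hss : (G.neighborFinset u).filter (fun a => sig a < sig x) ⊂
        (G.neighborFinset u).filter (fun a => sig a < sig y) := by
      refine Finset.ssubset_iff_of_subset ?_ |>.mpr ?_
      · intro a ha
        rw [Finset.mem_filter] at ha ⊢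
        exact ⟨ha.1, lt_trans ha.2 hk⟩
      · exact ⟨x, Finset.mem_filter.mpr ⟨hxm, hk⟩, by simp⟩
    have := Finset.card_lt_card hss
    rw [idx, idx] at h
    omega
  · exact sig_inj hk
  · exfalso
    have hss : (G.neighborFinset u).filter (fun a => sig a < sig y) ⊂
        (G.neighborFinset u).filter (fun a => sig a < sig x) := by
      refine Finset.ssubset_iff_of_subset ?_ |>.mpr ?_
      · intro a ha
        rw [Finset.mem_filter] at ha ⊢
        exact ⟨ha.1, lt_trans ha.2 hk⟩
      · exact ⟨y, Finset.mem_filter.mpr ⟨hym, hk⟩, by simp⟩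
    have := Finset.card_lt_card hss
    rw [idx, idx] at h
    omega

variable (G S W) in
noncomputable def enc : Finset (ℕ × ℕ) :=
  (W \ S).image (fun w => (pos G S W (par G S W w), idx G (par G S W w) w))

lemma dd_ne_zero {w : V} (hgood : ∀ x ∈ W, good G S W x) (hw : w ∈ W) (hws : w ∉ S) :
    dd G S W w ≠ 0 :=
  fun h0 => hws (mem_S_of_dd_zero (hgood w hw) h0)

lemma enc_card (hgood : ∀ x ∈ W, good G S W x) : (enc G S W).card = (W \ S).card := by
  rw [enc]
  apply Finset.card_image_of_injOn
  intro w hw w' hw' hpair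
  rw [Finset.mem_coe, Finset.mem_sdiff] at hw hw'
  obtain ⟨hp1, hp2, hp3, hp4⟩ := par_spec hw.1 (hgood w hw.1) (dd_ne_zero hgood hw.1 hw.2)
  obtain ⟨hq1, hq2, hq3, hq4⟩ := par_spec hw'.1 (hgood w' hw'.1) (dd_ne_zero hgood hw'.1 hw'.2)
  have h1 : pos G S W (par G S W w) = pos G S W (par G S W w') := congrArg Prod.fst hpair
  have hu : par G S W w = par G S W w' := pos_injOn hp1 hq1 h1
  have h2 : idx G (par G S W w) w = idx G (par G S W w) w' := by
    have := congrArg Prod.snd hpair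
    simpa [hu] using this
  exact idx_inj hp2.symm (hu ▸ hq2.symm) h2

lemma enc_subset {z : ℕ} (hdeg : ∀ v : V, G.degree v ≤ z)
    (hgood : ∀ x ∈ W, good G S W x) :
    enc G S W ⊆ Finset.range W.card ×ˢ Finset.range z := by
  intro p hp
  rw [enc, Finset.mem_image] at hp
  obtain ⟨w, hw, rfl⟩ := hp
  rw [Finset.mem_sdiff] at hw
  obtain ⟨hp1, hp2, hp3, hp4⟩ := par_spec hw.1 (hgood w hw.1) (dd_ne_zero hgood hw.1 hw.2)
  rw [Finset.mem_product, Finset.mem_range, Finset.mem_range]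
  exact ⟨pos_lt hp1, idx_lt hdeg hp2.symm⟩

lemma key_congr {W1 W2 : Finset V} {x : V} (h : dd G S W1 x = dd G S W2 x) :
    key G S W1 x = key G S W2 x := by rw [key, key, h]

lemma pos_agree {W1 W2 : Finset V} {n : ℕ}
    (IH1 : ∀ w, (w ∈ W1 ∧ dd G S W1 w ≤ n) ↔ (w ∈ W2 ∧ dd G S W2 w ≤ n))
    (IH2 : ∀ w, w ∈ W1 → dd G S W1 w ≤ n → dd G S W1 w = dd G S W2 w)
    {u : V} (hu : u ∈ W1) (hdu : dd G S W1 u ≤ n) : pos G S W1 u = pos G S W2 u := by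
  have hu2 : u ∈ W2 := ((IH1 u).mp ⟨hu, hdu⟩).1
  have hddu : dd G S W1 u = dd G S W2 u := IH2 u hu hdu
  have hfil : W1.filter (fun x => key G S W1 x < key G S W1 u) =
      W2.filter (fun x => key G S W2 x < key G S W2 u) := by
    ext x
    simp only [Finset.mem_filter]
    constructor
    · rintro ⟨hx, hk⟩
      have hdx : dd G S W1 x ≤ n := le_trans (dd_le_of_key_lt hk) hdu
      have hx2 : x ∈ W2 := ((IH1 x).mp ⟨hx, hdx⟩).1
      have hddx : dd G S W1 x = dd G S W2 x := IH2 x hx hdx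
      exact ⟨hx2, by rw [← key_congr hddx, ← key_congr hddu]; exact hk⟩
    · rintro ⟨hx2, hk⟩
      have hdx2 : dd G S W2 x ≤ n := by
        have := dd_le_of_key_lt hk
        omega
      have hx1 : x ∈ W1 ∧ dd G S W1 x ≤ n := (IH1 x).mpr ⟨hx2, hdx2⟩
      have hddx : dd G S W1 x = dd G S W2 x := IH2 x hx1.1 hx1.2
      exact ⟨hx1.1, by rw [key_congr hddx, key_congr hddu]; exact hk⟩
  rw [pos, pos, hfil]

lemma layer_step {W1 W2 : Finset V}
    (hg1 : ∀ x ∈ W1, good G S W1 x) (hg2 : ∀ x ∈ W2, good G S W2 x)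
    (henc : enc G S W1 = enc G S W2) {n : ℕ}
    (IH1 : ∀ w, (w ∈ W1 ∧ dd G S W1 w ≤ n) ↔ (w ∈ W2 ∧ dd G S W2 w ≤ n))
    (IH2 : ∀ w, w ∈ W1 → dd G S W1 w ≤ n → dd G S W1 w = dd G S W2 w) :
    ∀ w, w ∈ W1 → dd G S W1 w = n + 1 → w ∈ W2 ∧ dd G S W2 w = n + 1 := by
  intro w hw hdw
  have hwS : w ∉ S := by
    intro hws
    have := dd_zero_of_mem (G:=G) (S:=S) hw hws
    omega
  obtain ⟨hp1, hp2, hp3, hp4⟩ := par_spec hw (hg1 w hw) (by omega)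
  have hdu : dd G S W1 (par G S W1 w) = n := by omega
  have hpair : (pos G S W1 (par G S W1 w), idx G (par G S W1 w) w) ∈ enc G S W1 :=
    Finset.mem_image_of_mem _ (Finset.mem_sdiff.mpr ⟨hw, hwS⟩)
  rw [henc, enc, Finset.mem_image] at hpair
  obtain ⟨w', hw', hpair⟩ := hpair
  rw [Finset.mem_sdiff] at hw'
  obtain ⟨hq1, hq2, hq3, hq4⟩ := par_spec hw'.1 (hg2 w' hw'.1) (dd_ne_zero hg2 hw'.1 hw'.2)
  have hposu : pos G S W1 (par G S W1 w) = pos G S W2 (par G S W1 w) :=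
    pos_agree IH1 IH2 hp1 (by omega)
  have h1 : pos G S W2 (par G S W2 w') = pos G S W2 (par G S W1 w) := by
    have := congrArg Prod.fst hpair
    simp only at this
    rw [this, hposu]
  have hu2 : par G S W1 w ∈ W2 := ((IH1 _).mp ⟨hp1, by omega⟩).1
  have huu : par G S W2 w' = par G S W1 w := pos_injOn hq1 hu2 h1
  have h2 : idx G (par G S W1 w) w' = idx G (par G S W1 w) w := by
    have := congrArg Prod.snd hpair
    simp only at this
    rw [← huu, this, huu]
  have hww : w' = w := idx_inj (huu ▸ hq2.symm) hp2.symm h2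
  have hdd2u : dd G S W2 (par G S W1 w) = n := by
    rw [← IH2 _ hp1 (by omega)]
    exact hdu
  refine ⟨hww ▸ hw'.1, ?_⟩
  have : dd G S W2 w' = n + 1 := by rw [← hq3, huu, hdd2u]
  rw [← hww]
  exact this

lemma layers {W1 W2 : Finset V}
    (hS1 : S ⊆ W1) (hS2 : S ⊆ W2)
    (hg1 : ∀ x ∈ W1, good G S W1 x) (hg2 : ∀ x ∈ W2, good G S W2 x)
    (henc : enc G S W1 = enc G S W2) :
    ∀ n, (∀ w, (w ∈ W1 ∧ dd G S W1 w ≤ n) ↔ (w ∈ W2 ∧ dd G S W2 w ≤ n)) ∧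
       (∀ w, w ∈ W1 → dd G S W1 w ≤ n → dd G S W1 w = dd G S W2 w) := by
  intro n
  induction n with
  | zero =>
    constructor
    · intro w
      have hfwd : ∀ (Wa : Finset V), S ⊆ Wa → (∀ x ∈ Wa, good G S Wa x) →
          (w ∈ Wa ∧ dd G S Wa w ≤ 0 ↔ w ∈ S) := by
        intro Wa hSa hga
        constructor
        · rintro ⟨hw, hd⟩
          exact mem_S_of_dd_zero (hga w hw) (Nat.le_zero.mp hd)
        · intro hws
          exact ⟨hSa hws, le_of_eq (dd_zero_of_mem (hSa hws) hws)⟩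
      rw [hfwd W1 hS1 hg1, hfwd W2 hS2 hg2]
    · intro w hw hd
      have hws : w ∈ S := mem_S_of_dd_zero (hg1 w hw) (Nat.le_zero.mp hd)
      rw [dd_zero_of_mem hw hws, dd_zero_of_mem (hS2 hws) hws]
  | succ n ih =>
    obtain ⟨IH1, IH2⟩ := ih
    have step12 := layer_step hg1 hg2 henc IH1 IH2
    have IH1' : ∀ w, (w ∈ W2 ∧ dd G S W2 w ≤ n) ↔ (w ∈ W1 ∧ dd G S W1 w ≤ n) :=
      fun w => (IH1 w).symm
    have IH2' : ∀ w, w ∈ W2 → dd G S W2 w ≤ n → dd G S W2 w = dd G S W1 w := by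
      intro w hw hd
      have h := (IH1 w).mpr ⟨hw, hd⟩
      exact (IH2 w h.1 h.2).symm
    have step21 := layer_step hg2 hg1 henc.symm IH1' IH2'
    constructor
    · intro w
      constructor
      · rintro ⟨hw, hd⟩
        rcases Nat.lt_or_ge (dd G S W1 w) (n+1) with h | h
        · have := (IH1 w).mp ⟨hw, by omega⟩
          exact ⟨this.1, by omega⟩
        · have h' : dd G S W1 w = n + 1 := by omega
          have := step12 w hw h'
          exact ⟨this.1, by omega⟩
      · rintro ⟨hw, hd⟩
        rcases Nat.lt_or_ge (dd G S W2 w) (n+1) with h | h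
        · have := (IH1 w).mpr ⟨hw, by omega⟩
          exact ⟨this.1, by omega⟩
        · have h' : dd G S W2 w = n + 1 := by omega
          have := step21 w hw h'
          exact ⟨this.1, by omega⟩
    · intro w hw hd
      rcases Nat.lt_or_ge (dd G S W1 w) (n+1) with h | h
      · exact IH2 w hw (by omega)
      · have h' : dd G S W1 w = n + 1 := by omega
        have := step12 w hw h'
        omega

lemma enc_inj {W1 W2 : Finset V}
    (hS1 : S ⊆ W1) (hS2 : S ⊆ W2)
    (hg1 : ∀ x ∈ W1, good G S W1 x) (hg2 : ∀ x ∈ W2, good G S W2 x)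
    (henc : enc G S W1 = enc G S W2) : W1 = W2 := by
  apply Finset.ext
  intro w
  constructor
  · intro hw
    exact (((layers hS1 hS2 hg1 hg2 henc (dd G S W1 w)).1 w).mp ⟨hw, le_refl _⟩).1
  · intro hw
    exact (((layers hS1 hS2 hg1 hg2 henc (dd G S W2 w)).1 w).mpr ⟨hw, le_refl _⟩).1

lemma good_of_reachable {W : Finset V} {x : V} (hx : x ∈ W)
    (h : ∃ v : V, v ∈ S ∧ ∃ hv : v ∈ (W : Set V),
        (G.induce (W : Set V)).Reachable ⟨x, Finset.mem_coe.mpr hx⟩ ⟨v, hv⟩) :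
    good G S W x := by
  obtain ⟨v, hvS, hv, hr⟩ := h
  obtain ⟨p⟩ := hr
  let f : G.induce (W : Set V) →g G := ⟨Subtype.val, fun h => h⟩
  refine ⟨(p.map f).length, v, hvS, p.map f, ?_, rfl⟩
  intro y hy
  rw [Walk.support_map] at hy
  obtain ⟨a, _, rfl⟩ := List.mem_map.mp hy
  exact Finset.mem_coe.mp a.2

end Stmt14

theorem fac_lb : ∀ k : ℕ, ((k:ℝ))^k ≤ (k.factorial : ℝ) * Real.exp 1 ^ (k-1) := by
  intro k
  induction k with
  | zero => simp
  | succ k ih =>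
    rcases Nat.eq_zero_or_pos k with hk | hk
    · subst hk; simp
    · have hkR : (0:ℝ) < k := by positivity
      have h1 : ((k:ℝ)+1)^k ≤ (k:ℝ)^k * Real.exp 1 := by
        have h2 : (k:ℝ) + 1 ≤ (k:ℝ) * Real.exp (1/(k:ℝ)) := by
          have := Real.add_one_le_exp (1/(k:ℝ))
          calc (k:ℝ) + 1 = (k:ℝ) * (1/(k:ℝ) + 1) := by field_simp; ring
            _ ≤ (k:ℝ) * Real.exp (1/(k:ℝ)) := mul_le_mul_of_nonneg_left this (le_of_lt hkR)
        calc ((k:ℝ)+1)^k ≤ ((k:ℝ) * Real.exp (1/(k:ℝ)))^k := by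
              apply pow_le_pow_left₀ (by positivity) h2
          _ = (k:ℝ)^k * Real.exp (1/(k:ℝ))^k := mul_pow _ _ _
          _ = (k:ℝ)^k * Real.exp 1 := by
              rw [← Real.exp_nat_mul]
              congr 1
              field_simp
      have : ((k:ℝ)+1)^(k+1) ≤ ((k+1).factorial : ℝ) * Real.exp 1 ^ (k+1-1) := by
        calc ((k:ℝ)+1)^(k+1) = ((k:ℝ)+1) * ((k:ℝ)+1)^k := by ring
          _ ≤ ((k:ℝ)+1) * ((k:ℝ)^k * Real.exp 1) :=
              mul_le_mul_of_nonneg_left h1 (by positivity)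
          _ ≤ ((k:ℝ)+1) * ((k.factorial : ℝ) * Real.exp 1 ^ (k-1) * Real.exp 1) := by
              apply mul_le_mul_of_nonneg_left _ (by positivity)
              exact mul_le_mul_of_nonneg_right ih (le_of_lt (Real.exp_pos 1))
          _ = ((k+1).factorial : ℝ) * Real.exp 1 ^ (k-1+1) := by
              push_cast [Nat.factorial_succ]
              ring
          _ = ((k+1).factorial : ℝ) * Real.exp 1 ^ (k+1-1) := by
              congr 2
              omega
      calc ((k+1:ℕ):ℝ)^(k+1) = ((k:ℝ)+1)^(k+1) := by push_cast; ring
        _ ≤ _ := this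


theorem pow_s_le (k t' : ℕ) (hk : 1 ≤ k) :
    ((k+t' : ℕ):ℝ)^k ≤ ((k:ℝ))^k * Real.exp 1 ^ t' := by
  have hkR : (0:ℝ) < k := by exact_mod_cast hk
  have h2 : ((k:ℝ)) + t' ≤ (k:ℝ) * Real.exp ((t':ℝ)/(k:ℝ)) := by
    have := Real.add_one_le_exp ((t':ℝ)/(k:ℝ))
    calc (k:ℝ) + t' = (k:ℝ) * ((t':ℝ)/(k:ℝ) + 1) := by field_simp; ring
      _ ≤ _ := mul_le_mul_of_nonneg_left this (le_of_lt hkR)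
  calc ((k+t' : ℕ):ℝ)^k = ((k:ℝ) + t')^k := by push_cast; ring
    _ ≤ ((k:ℝ) * Real.exp ((t':ℝ)/(k:ℝ)))^k := pow_le_pow_left₀ (by positivity) h2 k
    _ = (k:ℝ)^k * Real.exp ((t':ℝ)/(k:ℝ))^k := mul_pow _ _ _
    _ = (k:ℝ)^k * Real.exp 1 ^ t' := by
        rw [← Real.exp_nat_mul, Real.exp_one_pow]
        congr 1
        field_simp


theorem choose_bound (z s t : ℕ) (ht : 1 ≤ t) (hts : t ≤ s) :
    ((s*z).choose (s-t) : ℝ) ≤ Real.exp 1 ^ (s-1) * (z:ℝ) ^ (s-t) := by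
  have he1 : (1:ℝ) ≤ Real.exp 1 := Real.one_le_exp (by norm_num)
  set k := s - t with hkdef
  rcases Nat.eq_zero_or_pos k with hk | hk
  · rw [hk]
    simp only [Nat.choose_zero_right, pow_zero, mul_one, Nat.cast_one]
    exact one_le_pow₀ he1
  · -- k ≥ 1 : choose(sz,k)*k! ≤ (sz)^k = s^k z^k ≤ k^k e^t z^k ≤ k! e^(k-1) e^t z^k
    have hsk : s = k + t := by omega
    have hnat : k.factorial * (s*z).choose k ≤ (s*z)^k := by
      rw [← Nat.descFactorial_eq_factorial_mul_choose]
      exact Nat.descFactorial_le_pow _ _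
    have hR1 : (k.factorial : ℝ) * ((s*z).choose k) ≤ ((s:ℝ)*z)^k := by
      have h := hnat
      have : ((k.factorial * (s*z).choose k : ℕ) : ℝ) ≤ (((s*z)^k : ℕ) : ℝ) := by exact_mod_cast h
      push_cast at this
      convert this using 1
    have hR2 : ((s:ℝ)*z)^k ≤ ((k.factorial:ℝ) * Real.exp 1 ^ (k-1) * Real.exp 1 ^ t) * (z:ℝ)^k := by
      have h1 : ((s:ℝ))^k ≤ (k:ℝ)^k * Real.exp 1 ^ t := by
        have := pow_s_le k t hk
        rwa [← hsk] at this
      have h2 : ((k:ℝ))^k ≤ (k.factorial : ℝ) * Real.exp 1 ^ (k-1) := fac_lb k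
      calc ((s:ℝ)*z)^k = (s:ℝ)^k * (z:ℝ)^k := mul_pow _ _ _
        _ ≤ ((k:ℝ)^k * Real.exp 1 ^ t) * (z:ℝ)^k := by
            apply mul_le_mul_of_nonneg_right h1 (by positivity)
        _ ≤ ((k.factorial:ℝ) * Real.exp 1 ^ (k-1) * Real.exp 1 ^ t) * (z:ℝ)^k := by
            apply mul_le_mul_of_nonneg_right _ (by positivity)
            exact mul_le_mul_of_nonneg_right h2 (by positivity)
    have hfpos : (0:ℝ) < (k.factorial : ℝ) := by exact_mod_cast k.factorial_pos
    have key : (k.factorial : ℝ) * ((s*z).choose k) ≤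
        (k.factorial:ℝ) * (Real.exp 1 ^ (s-1) * (z:ℝ)^k) := by
      calc (k.factorial : ℝ) * ((s*z).choose k) ≤ ((s:ℝ)*z)^k := hR1
        _ ≤ ((k.factorial:ℝ) * Real.exp 1 ^ (k-1) * Real.exp 1 ^ t) * (z:ℝ)^k := hR2
        _ = (k.factorial:ℝ) * (Real.exp 1 ^ ((k-1)+t) * (z:ℝ)^k) := by rw [pow_add]; ring
        _ = (k.factorial:ℝ) * (Real.exp 1 ^ (s-1) * (z:ℝ)^k) := by
            congr 3
            omega
    exact le_of_mul_le_mul_left key hfpos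


/-- Counting bound for connected error clusters: in a graph of maximum degree
`z`, the number of `s`-element vertex sets containing a fixed `t`-element set
`S`, each of whose induced connected components meets `S`, is at most
`e^(t-1) · (z·e)^(s-t)`. -/
theorem stmt14
    {V : Type*} [Fintype V] [DecidableEq V]
    (G : SimpleGraph V) [DecidableRel G.Adj]
    (z : ℕ) (hz : 1 ≤ z) (hdeg : ∀ v : V, G.degree v ≤ z)
    (S : Finset V) (t : ℕ) (ht : 1 ≤ t) (hS : S.card = t) :
    ∀ s : ℕ, t ≤ s →
      (({W : Finset V | S ⊆ W ∧ W.card = s ∧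
          ∀ w : V, ∀ hw : w ∈ (W : Set V), ∃ v : V, v ∈ S ∧ ∃ hv : v ∈ (W : Set V),
            (G.induce (W : Set V)).Reachable ⟨w, hw⟩ ⟨v, hv⟩} : Set (Finset V)).ncard : ℝ)
        ≤ Real.exp 1 ^ (t - 1) * ((z : ℝ) * Real.exp 1) ^ (s - t) := by
  intro s hts
  set A := ({W : Finset V | S ⊆ W ∧ W.card = s ∧
          ∀ w : V, ∀ hw : w ∈ (W : Set V), ∃ v : V, v ∈ S ∧ ∃ hv : v ∈ (W : Set V),
            (G.induce (W : Set V)).Reachable ⟨w, hw⟩ ⟨v, hv⟩} : Set (Finset V)) with hA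
  have hfacts : ∀ W ∈ A, S ⊆ W ∧ W.card = s ∧ ∀ x ∈ W, Stmt14.good G S W x := by
    intro W hW
    obtain ⟨h1, h2, h3⟩ := hW
    refine ⟨h1, h2, ?_⟩
    intro x hx
    exact Stmt14.good_of_reachable hx (h3 x (Finset.mem_coe.mpr hx))
  have hinj : Set.InjOn (Stmt14.enc G S) A := by
    intro W1 h1 W2 h2 h
    obtain ⟨a1, b1, c1⟩ := hfacts W1 h1
    obtain ⟨a2, b2, c2⟩ := hfacts W2 h2
    exact Stmt14.enc_inj a1 a2 c1 c2 h
  have himg : (Stmt14.enc G S) '' A ⊆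
      ↑((Finset.range s ×ˢ Finset.range z).powersetCard (s - t)) := by
    rintro _ ⟨W, hW, rfl⟩
    obtain ⟨hSW, hcard, hg⟩ := hfacts W hW
    rw [Finset.mem_coe, Finset.mem_powersetCard]
    constructor
    · have := Stmt14.enc_subset (z := z) hdeg hg
      rwa [hcard] at this
    · rw [Stmt14.enc_card hg, Finset.card_sdiff_of_subset hSW, hcard, hS]
  have h1 : A.ncard ≤ ((s*z).choose (s-t)) := by
    have e1 : ((Stmt14.enc G S) '' A).ncard = A.ncard := Set.ncard_image_of_injOn hinj
    have e2 : ((Stmt14.enc G S) '' A).ncard ≤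
        (↑((Finset.range s ×ˢ Finset.range z).powersetCard (s - t)) : Set (Finset (ℕ × ℕ))).ncard :=
      Set.ncard_le_ncard himg (Finset.finite_toSet _)
    rw [Set.ncard_coe_finset, Finset.card_powersetCard, Finset.card_product,
      Finset.card_range, Finset.card_range] at e2
    omega
  calc (A.ncard : ℝ) ≤ ((s*z).choose (s-t) : ℝ) := Nat.cast_le.mpr h1
    _ ≤ Real.exp 1 ^ (s-1) * (z:ℝ)^(s-t) := choose_bound z s t ht hts
    _ = Real.exp 1 ^ (t-1) * ((z:ℝ) * Real.exp 1)^(s-t) := by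
        rw [mul_pow, show s-1 = (t-1)+(s-t) by omega, pow_add]
        ring
end
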